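/- arXiv:1504.04151 — 15 statements merged into one kernel-verified Lean document; each statement's English description precedes it below -/
import Mathlib

section
/- The antisymmetric bilinear bracket [·,·] on ℝ³ determined on the standard basis e₀, e₁, e₂ by [e₀,e₁] = −d·e₀, [e₀,e₂] = c·e₀, [e₁,e₂] = a·e₁ + b·e₂ satisfies the Jacobi identity [[x,y],z] + [[y,z],x] + [[z,x],y] = 0 for all x, y, z ∈ ℝ³ if and only if a·d = b·c. -/
noncomputable section

/-- `V = ℝ³`. -/
abbrev V : Type := Fin 3 → ℝ

/-- The standard basis `e₀, e₁, e₂` of `V = ℝ³`. -/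
def e : Fin 3 → V := fun i => Pi.single i 1

/-- The B-metric `g`: the symmetric bilinear form with
`g(e₀,e₀) = g(e₁,e₁) = 1`, `g(e₂,e₂) = -1`, `g(eᵢ,eⱼ) = 0` for `i ≠ j`. -/
def gB (x y : V) : ℝ := x 0 * y 0 + x 1 * y 1 - x 2 * y 2

/-- The linear map `φ` with `φe₀ = 0`, `φe₁ = e₂`, `φe₂ = -e₁`. -/
def phi : V → V := fun x => ![0, -(x 2), x 1]

/-- The 1-form `η` with `η(e₀) = 1`, `η(e₁) = η(e₂) = 0`. -/
def eta (x : V) : ℝ := x 0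

/-- The signs `ε₀ = ε₁ = 1`, `ε₂ = -1`. -/
def eps : Fin 3 → ℝ := ![1, 1, -1]

/-- The curvature tensor `R(x,y)z = ∇ₓ(∇ᵧz) − ∇ᵧ(∇ₓz) − ∇_{[x,y]}z`. -/
def Rc (br nabla : V →ₗ[ℝ] V →ₗ[ℝ] V) (x y z : V) : V :=
  nabla x (nabla y z) - nabla y (nabla x z) - nabla (br x y) z

/-- The curvature tensor of type (0,4): `R(x,y,z,w) = g(R(x,y)z, w)`. -/
def R4 (br nabla : V →ₗ[ℝ] V →ₗ[ℝ] V) (x y z w : V) : ℝ :=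
  gB (Rc br nabla x y z) w

/-- The Ricci tensor `ρ(y,z) = R(e₀,y,z,e₀) + R(e₁,y,z,e₁) − R(e₂,y,z,e₂)`. -/
def ric (br nabla : V →ₗ[ℝ] V →ₗ[ℝ] V) (y z : V) : ℝ :=
  R4 br nabla (e 0) y z (e 0) + R4 br nabla (e 1) y z (e 1) - R4 br nabla (e 2) y z (e 2)

/-- The scalar curvature `τ = ρ(e₀,e₀) + ρ(e₁,e₁) − ρ(e₂,e₂)`. -/
def scal (br nabla : V →ₗ[ℝ] V →ₗ[ℝ] V) : ℝ :=
  ric br nabla (e 0) (e 0) + ric br nabla (e 1) (e 1) - ric br nabla (e 2) (e 2)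

/-- The associated Ricci tensor
`ρ*(y,z) = R(e₀,y,z,φe₀) + R(e₁,y,z,φe₁) − R(e₂,y,z,φe₂)`. -/
def ricStar (br nabla : V →ₗ[ℝ] V →ₗ[ℝ] V) (y z : V) : ℝ :=
  R4 br nabla (e 0) y z (phi (e 0)) + R4 br nabla (e 1) y z (phi (e 1))
    - R4 br nabla (e 2) y z (phi (e 2))

/-- The associated scalar curvature `τ* = ρ*(e₀,e₀) + ρ*(e₁,e₁) − ρ*(e₂,e₂)`. -/
def scalStar (br nabla : V →ₗ[ℝ] V →ₗ[ℝ] V) : ℝ :=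
  ricStar br nabla (e 0) (e 0) + ricStar br nabla (e 1) (e 1) - ricStar br nabla (e 2) (e 2)

/-- The covariant derivative of `φ`: `(∇φ)(x,y) = ∇ₓ(φy) − φ(∇ₓy)`. -/
def nablaPhi (nabla : V →ₗ[ℝ] V →ₗ[ℝ] V) (x y : V) : V :=
  nabla x (phi y) - phi (nabla x y)

/-- The square norm `‖∇φ‖² = Σ_{i,k} εᵢεₖ g((∇φ)(eᵢ,eₖ), (∇φ)(eᵢ,eₖ))`. -/
def normNablaPhiSq (nabla : V →ₗ[ℝ] V →ₗ[ℝ] V) : ℝ :=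
  ∑ i : Fin 3, ∑ k : Fin 3,
    eps i * eps k * gB (nablaPhi nabla (e i) (e k)) (nablaPhi nabla (e i) (e k))

/-- The antisymmetric bilinear bracket on ℝ³ with
`[e₀,e₁] = −d·e₀`, `[e₀,e₂] = c·e₀`, `[e₁,e₂] = a·e₁ + b·e₂` satisfies the
Jacobi identity if and only if `a·d = b·c`. -/
theorem statement0 (a b c d : ℝ) (br : V →ₗ[ℝ] V →ₗ[ℝ] V)
    (hskew : ∀ x y : V, br x y = - br y x)
    (h01 : br (e 0) (e 1) = (-d) • e 0)
    (h02 : br (e 0) (e 2) = c • e 0)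
    (h12 : br (e 1) (e 2) = a • e 1 + b • e 2) :
    (∀ x y z : V, br (br x y) z + br (br y z) x + br (br z x) y = 0) ↔ a * d = b * c := by
  have hdiag : ∀ x : V, br x x = 0 := fun x => by
    have h := hskew x x
    have : (2 : ℝ) • br x x = 0 := by rw [two_smul]; nth_rewrite 2 [h]; abel
    simpa using (smul_eq_zero.mp this).resolve_left (by norm_num)
  have h10 : br (e 1) (e 0) = d • e 0 := by rw [hskew, h01]; module
  have h20 : br (e 2) (e 0) = (-c) • e 0 := by rw [hskew, h02]; module
  have h21 : br (e 2) (e 1) = (-a) • e 1 + (-b) • e 2 := by rw [hskew, h12]; module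
  constructor
  · intro hJ
    have key := hJ (e 0) (e 1) (e 2)
    have : br (br (e 0) (e 1)) (e 2) + br (br (e 1) (e 2)) (e 0) + br (br (e 2) (e 0)) (e 1)
        = (a * d - b * c) • e 0 := by
      rw [h01, h12, h20]
      simp only [map_smul, map_add, LinearMap.smul_apply, LinearMap.add_apply, map_neg,
        LinearMap.neg_apply, h02, h10, h20, h01]
      module
    rw [this] at key
    have := congrFun key 0
    simp [e, Pi.single_apply] at this
    linarith
  · intro h x y z
    have hx : ∀ w : V, w = w 0 • e 0 + w 1 • e 1 + w 2 • e 2 := by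
      intro w
      funext i
      fin_cases i <;> simp [e, Pi.single_apply]
    rw [hx x, hx y, hx z]
    simp only [map_add, map_smul, LinearMap.add_apply, LinearMap.smul_apply,
      h01, h02, h10, h12, h20, h21, hdiag, map_zero, LinearMap.zero_apply,
      smul_zero, zero_add, add_zero, smul_add, smul_smul]
    funext i
    fin_cases i <;> simp [e, Pi.single_apply] <;> (try ring) <;>
      linear_combination (-(z 0 * y 1 * x 2) + z 0 * y 2 * x 1 - x 0 * z 1 * y 2 + x 0 * z 2 * y 1 - y 0 * x 1 * z 2 + y 0 * x 2 * z 1) * h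
end
end

section
/- There is a unique bilinear map ∇ : V × V → V satisfying the Koszul identity 2g(∇ₓy, z) = g([x,y],z) + g([z,x],y) + g([z,y],x) for all x, y, z ∈ V, and its values on the basis are: ∇_{e₀}e₀ = ω₂e₁ + ω₁e₂, ∇_{e₀}e₁ = −ω₂e₀, ∇_{e₀}e₂ = ω₁e₀, ∇_{e₁}e₀ = ∇_{e₂}e₀ = 0, ∇_{e₁}e₁ = (1/2)θ₁e₂, ∇_{e₁}e₂ = (1/2)θ₁e₁, ∇_{e₂}e₁ = −(1/2)θ₂e₂, ∇_{e₂}e₂ = −(1/2)θ₂e₁. -/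
noncomputable section

/-- The candidate Levi-Civita connection, defined componentwise. -/
def Ncon (θ₁ θ₂ ω₁ ω₂ : ℝ) : V →ₗ[ℝ] V →ₗ[ℝ] V :=
  LinearMap.mk₂ ℝ
    (fun x y => ![x 0 * (-ω₂ * y 1 + ω₁ * y 2),
      ω₂ * (x 0 * y 0) + (θ₁/2) * (x 1 * y 2) - (θ₂/2) * (x 2 * y 2),
      ω₁ * (x 0 * y 0) + (θ₁/2) * (x 1 * y 1) - (θ₂/2) * (x 2 * y 1)])
    (by intro x x' y; funext i; fin_cases i <;>
        simp [Matrix.cons_val_zero, Matrix.cons_val_one, Matrix.head_cons] <;> ring)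
    (by intro c x y; funext i; fin_cases i <;>
        simp [Matrix.cons_val_zero, Matrix.cons_val_one, Matrix.head_cons,
          smul_eq_mul] <;> ring)
    (by intro x y y'; funext i; fin_cases i <;>
        simp [Matrix.cons_val_zero, Matrix.cons_val_one, Matrix.head_cons] <;> ring)
    (by intro c x y; funext i; fin_cases i <;>
        simp [Matrix.cons_val_zero, Matrix.cons_val_one, Matrix.head_cons,
          smul_eq_mul] <;> ring)

lemma basis_expand (x : V) : x = x 0 • e 0 + x 1 • e 1 + x 2 • e 2 := by
  funext i; fin_cases i <;> simp [e, Pi.single_apply]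

lemma gB_eq_zero (v : V) (h : ∀ z : V, gB v z = 0) : v = 0 := by
  have h0 := h (e 0); have h1 := h (e 1); have h2 := h (e 2)
  simp [gB, e, Pi.single_apply] at h0 h1 h2
  funext i; fin_cases i <;> simp [h0, h1, h2]

/-- There is a unique bilinear map `∇` satisfying the Koszul identity,
and its values on the basis are the listed ones. -/
theorem statement1 (θ₁ θ₂ ω₁ ω₂ : ℝ) (hcomm : θ₁ * ω₂ = θ₂ * ω₁)
    (br : V →ₗ[ℝ] V →ₗ[ℝ] V)
    (hskew : ∀ x y : V, br x y = - br y x)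
    (h01 : br (e 0) (e 1) = (-ω₂) • e 0)
    (h02 : br (e 0) (e 2) = ω₁ • e 0)
    (h12 : br (e 1) (e 2) = ((1/2) * θ₁) • e 1 + ((1/2) * θ₂) • e 2) :
    (∃! n : V →ₗ[ℝ] V →ₗ[ℝ] V, ∀ x y z : V,
        2 * gB (n x y) z = gB (br x y) z + gB (br z x) y + gB (br z y) x) ∧
    (∀ n : V →ₗ[ℝ] V →ₗ[ℝ] V,
      (∀ x y z : V, 2 * gB (n x y) z = gB (br x y) z + gB (br z x) y + gB (br z y) x) →
        (n (e 0) (e 0) = ω₂ • e 1 + ω₁ • e 2 ∧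
         n (e 0) (e 1) = (-ω₂) • e 0 ∧
         n (e 0) (e 2) = ω₁ • e 0 ∧
         n (e 1) (e 0) = 0 ∧
         n (e 2) (e 0) = 0 ∧
         n (e 1) (e 1) = ((1/2) * θ₁) • e 2 ∧
         n (e 1) (e 2) = ((1/2) * θ₁) • e 1 ∧
         n (e 2) (e 1) = (-((1/2) * θ₂)) • e 2 ∧
         n (e 2) (e 2) = (-((1/2) * θ₂)) • e 1)) := by
  -- br x x = 0
  have hself : ∀ x : V, br x x = 0 := by
    intro x
    have h := hskew x x
    have h2 : (2:ℝ) • br x x = 0 := by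
      rw [two_smul]; nth_rewrite 2 [h]; simp
    simpa using (smul_eq_zero.mp h2).resolve_left (by norm_num)
  have h10 : br (e 1) (e 0) = ω₂ • e 0 := by
    rw [hskew, h01]; simp
  have h20 : br (e 2) (e 0) = (-ω₁) • e 0 := by
    rw [hskew, h02]; simp
  have h21 : br (e 2) (e 1) = (-((1/2) * θ₁)) • e 1 + (-((1/2) * θ₂)) • e 2 := by
    rw [hskew, h12]; simp; abel
  -- br in coordinates
  have hbr : ∀ x y : V, br x y =
      ![-(ω₂) * (x 0 * y 1 - x 1 * y 0) + ω₁ * (x 0 * y 2 - x 2 * y 0),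
        (θ₁/2) * (x 1 * y 2 - x 2 * y 1),
        (θ₂/2) * (x 1 * y 2 - x 2 * y 1)] := by
    intro x y
    conv_lhs => rw [basis_expand x, basis_expand y]
    simp only [map_add, map_smul, LinearMap.add_apply, LinearMap.smul_apply,
      h01, h02, h10, h12, h20, h21, hself]
    funext i
    fin_cases i <;>
      simp [e, Pi.single_apply, Matrix.cons_val_zero, Matrix.cons_val_one,
        Matrix.head_cons] <;> ring
  -- Ncon satisfies the Koszul identity
  have hkos : ∀ x y z : V, 2 * gB ((Ncon θ₁ θ₂ ω₁ ω₂) x y) z =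
      gB (br x y) z + gB (br z x) y + gB (br z y) x := by
    intro x y z
    rw [hbr x y, hbr z x, hbr z y]
    simp only [Ncon, LinearMap.mk₂_apply, gB, Matrix.cons_val_zero,
      Matrix.cons_val_one, Matrix.head_cons, Matrix.cons_val_two, Matrix.tail_cons]
    ring
  -- uniqueness
  have huniq : ∀ n : V →ₗ[ℝ] V →ₗ[ℝ] V,
      (∀ x y z : V, 2 * gB (n x y) z = gB (br x y) z + gB (br z x) y + gB (br z y) x) →
      n = Ncon θ₁ θ₂ ω₁ ω₂ := by
    intro n hn
    apply LinearMap.ext; intro x; apply LinearMap.ext; intro y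
    have hz : ∀ z : V, gB (n x y - (Ncon θ₁ θ₂ ω₁ ω₂) x y) z = 0 := by
      intro z
      have h1 := hn x y z
      have h2 := hkos x y z
      have h3 : gB (n x y) z = gB ((Ncon θ₁ θ₂ ω₁ ω₂) x y) z := by linarith
      simp only [gB, Pi.sub_apply] at h3 ⊢
      linarith
    exact sub_eq_zero.mp (gB_eq_zero _ hz)
  constructor
  · exact ⟨Ncon θ₁ θ₂ ω₁ ω₂, hkos, huniq⟩
  · intro n hn
    rw [huniq n hn]
    refine ⟨?_, ?_, ?_, ?_, ?_, ?_, ?_, ?_, ?_⟩ <;>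
      (funext i; fin_cases i <;>
        simp [Ncon, e, Pi.single_apply, Matrix.cons_val_zero, Matrix.cons_val_one,
          Matrix.head_cons] <;> ring)
end
end

section
/- The tensor F(x,y,z) := g(∇ₓ(φy) − φ(∇ₓy), z) has the following components F_{ijk} := F(eᵢ,eⱼ,eₖ): F₀₀₁ = F₀₁₀ = ω₁, F₀₀₂ = F₀₂₀ = ω₂, F₁₁₁ = F₁₂₂ = θ₁, F₂₁₁ = F₂₂₂ = −θ₂, and all other components F_{ijk} with i,j,k ∈ {0,1,2} are zero. -/
noncomputable section

/-- The table of components of the fundamental tensor `F`: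
`F₀₀₁ = F₀₁₀ = ω₁`, `F₀₀₂ = F₀₂₀ = ω₂`, `F₁₁₁ = F₁₂₂ = θ₁`, `F₂₁₁ = F₂₂₂ = −θ₂`,
all other components zero. -/
def Fexp (θ₁ θ₂ ω₁ ω₂ : ℝ) : Fin 3 → Fin 3 → Fin 3 → ℝ :=
  ![![![0, ω₁, ω₂], ![ω₁, 0, 0], ![ω₂, 0, 0]],
    ![![0, 0, 0], ![0, θ₁, 0], ![0, 0, θ₁]],
    ![![0, 0, 0], ![0, -θ₂, 0], ![0, 0, -θ₂]]]

set_option maxHeartbeats 2000000 in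
/-- the components of `F(x,y,z) = g(∇ₓ(φy) − φ(∇ₓy), z)` on the basis. -/
theorem statement2
    (θ₁ θ₂ ω₁ ω₂ : ℝ) (hcomm : θ₁ * ω₂ = θ₂ * ω₁)
    (br : V →ₗ[ℝ] V →ₗ[ℝ] V)
    (hskew : ∀ x y : V, br x y = - br y x)
    (h01 : br (e 0) (e 1) = (-ω₂) • e 0)
    (h02 : br (e 0) (e 2) = ω₁ • e 0)
    (h12 : br (e 1) (e 2) = ((1/2) * θ₁) • e 1 + ((1/2) * θ₂) • e 2)
    (nabla : V →ₗ[ℝ] V →ₗ[ℝ] V)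
    (hKoszul : ∀ x y z : V, 2 * gB (nabla x y) z =
      gB (br x y) z + gB (br z x) y + gB (br z y) x) :
    ∀ i j k : Fin 3,
      gB (nabla (e i) (phi (e j)) - phi (nabla (e i) (e j))) (e k) = Fexp θ₁ θ₂ ω₁ ω₂ i j k := by
  -- remaining bracket values
  have hself : ∀ x : V, br x x = 0 := by
    intro x
    have h := hskew x x
    have h2 : br x x + br x x = 0 := by nth_rewrite 1 [h]; simp
    have := congrArg (fun v => (2:ℝ)⁻¹ • v) h2
    simpa [smul_add, ← two_smul ℝ (br x x), smul_smul] using this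
  have h00 := hself (e 0)
  have h11 := hself (e 1)
  have h22 := hself (e 2)
  have h10 : br (e 1) (e 0) = ω₂ • e 0 := by
    rw [hskew, h01]; funext k; simp
  have h20 : br (e 2) (e 0) = (-ω₁) • e 0 := by
    rw [hskew, h02]; funext k; simp
  have h21 : br (e 2) (e 1) = (-(1/2 * θ₁)) • e 1 + (-(1/2 * θ₂)) • e 2 := by
    rw [hskew, h12]; funext k; simp; ring
  -- coordinate extraction lemma
  have coord : ∀ v : V, v = ![gB v (e 0), gB v (e 1), -gB v (e 2)] := by
    intro v; funext k
    fin_cases k <;> simp [gB, e, Pi.single_apply] <;> ring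
  -- compute all covariant derivatives
  have hNab : ∀ a b : Fin 3, ∀ w : V,
      (gB (br (e a) (e b)) (e 0) + gB (br (e 0) (e a)) (e b) + gB (br (e 0) (e b)) (e a)) = 2 * w 0 →
      (gB (br (e a) (e b)) (e 1) + gB (br (e 1) (e a)) (e b) + gB (br (e 1) (e b)) (e a)) = 2 * w 1 →
      (gB (br (e a) (e b)) (e 2) + gB (br (e 2) (e a)) (e b) + gB (br (e 2) (e b)) (e a)) = -(2 * w 2) →
      nabla (e a) (e b) = w := by
    intro a b w hw0 hw1 hw2
    have k0 := hKoszul (e a) (e b) (e 0)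
    have k1 := hKoszul (e a) (e b) (e 1)
    have k2 := hKoszul (e a) (e b) (e 2)
    have g0 : gB w (e 0) = w 0 := by simp [gB, e, Pi.single_apply]
    have g1 : gB w (e 1) = w 1 := by simp [gB, e, Pi.single_apply]
    have g2 : gB w (e 2) = -(w 2) := by simp [gB, e, Pi.single_apply]; try ring
    have q0 : gB (nabla (e a) (e b)) (e 0) = gB w (e 0) := by rw [g0]; linarith
    have q1 : gB (nabla (e a) (e b)) (e 1) = gB w (e 1) := by rw [g1]; linarith
    have q2 : gB (nabla (e a) (e b)) (e 2) = gB w (e 2) := by rw [g2]; linarith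
    rw [coord (nabla (e a) (e b)), coord w, q0, q1, q2]
  have hN00 : nabla (e 0) (e 0) = ![0, ω₂, ω₁] := by
    apply hNab <;> simp only [h00, h01, h02, h10, h11, h12, h20, h21, h22] <;> simp [gB, e, Pi.single_apply] <;> try ring
  have hN01 : nabla (e 0) (e 1) = ![-ω₂, 0, 0] := by
    apply hNab <;> simp only [h00, h01, h02, h10, h11, h12, h20, h21, h22] <;> simp [gB, e, Pi.single_apply] <;> try ring
  have hN02 : nabla (e 0) (e 2) = ![ω₁, 0, 0] := by
    apply hNab <;> simp only [h00, h01, h02, h10, h11, h12, h20, h21, h22] <;> simp [gB, e, Pi.single_apply] <;> try ring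
  have hN10 : nabla (e 1) (e 0) = ![0, 0, 0] := by
    apply hNab <;> simp only [h00, h01, h02, h10, h11, h12, h20, h21, h22] <;> simp [gB, e, Pi.single_apply] <;> try ring
  have hN11 : nabla (e 1) (e 1) = ![0, 0, θ₁ / 2] := by
    apply hNab <;> simp only [h00, h01, h02, h10, h11, h12, h20, h21, h22] <;> simp [gB, e, Pi.single_apply] <;> try ring
  have hN12 : nabla (e 1) (e 2) = ![0, θ₁ / 2, 0] := by
    apply hNab <;> simp only [h00, h01, h02, h10, h11, h12, h20, h21, h22] <;> simp [gB, e, Pi.single_apply] <;> try ring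
  have hN20 : nabla (e 2) (e 0) = ![0, 0, 0] := by
    apply hNab <;> simp only [h00, h01, h02, h10, h11, h12, h20, h21, h22] <;> simp [gB, e, Pi.single_apply] <;> try ring
  have hN21 : nabla (e 2) (e 1) = ![0, 0, -(θ₂ / 2)] := by
    apply hNab <;> simp only [h00, h01, h02, h10, h11, h12, h20, h21, h22] <;> simp [gB, e, Pi.single_apply] <;> try ring
  have hN22 : nabla (e 2) (e 2) = ![0, -(θ₂ / 2), 0] := by
    apply hNab <;> simp only [h00, h01, h02, h10, h11, h12, h20, h21, h22] <;> simp [gB, e, Pi.single_apply] <;> try ring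
  -- phi on the basis
  have hphi0 : phi (e 0) = 0 := by
    funext k; fin_cases k <;> simp [phi, e, Pi.single_apply]
  have hphi1 : phi (e 1) = e 2 := by
    funext k; fin_cases k <;> simp [phi, e, Pi.single_apply]
  have hphi2 : phi (e 2) = -(e 1) := by
    funext k; fin_cases k <;> simp [phi, e, Pi.single_apply]
  intro i j k
  fin_cases i <;> fin_cases j <;> fin_cases k
  all_goals
    simp only [Fin.mk_zero, Fin.mk_one, show (⟨2, by omega⟩ : Fin 3) = 2 from rfl]
  all_goals
    simp only [hphi0, hphi1, hphi2, map_zero, map_neg,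
      hN00, hN01, hN02, hN10, hN11, hN12, hN20, hN21, hN22]
  all_goals
    simp [gB, phi, Fexp, e, Pi.single_apply, Pi.sub_apply, Pi.neg_apply, Pi.zero_apply, Matrix.vecHead, Matrix.vecTail]
  all_goals try ring
end
end

section
/- For all x = x⁰e₀ + x¹e₁ + x²e₂, y = y⁰e₀ + y¹e₁ + y²e₂, z = z⁰e₀ + z¹e₁ + z²e₂ in V, the fundamental tensor F(x,y,z) := g(∇ₓ(φy) − φ(∇ₓy), z) satisfies F(x,y,z) = (x¹θ₁ − x²θ₂)(y¹z¹ + y²z²) + x⁰[(y¹z⁰ + y⁰z¹)ω₁ + (y²z⁰ + y⁰z²)ω₂]; that is, F decomposes as F = F¹ + F¹¹, so the corresponding almost contact B-metric manifold belongs to the class F₁ ⊕ F₁₁. -/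
noncomputable section

/-- `F = F¹ + F¹¹`, i.e. the manifold belongs to the class `F₁ ⊕ F₁₁`. -/
theorem statement3
    (θ₁ θ₂ ω₁ ω₂ : ℝ) (hcomm : θ₁ * ω₂ = θ₂ * ω₁)
    (br : V →ₗ[ℝ] V →ₗ[ℝ] V)
    (hskew : ∀ x y : V, br x y = - br y x)
    (h01 : br (e 0) (e 1) = (-ω₂) • e 0)
    (h02 : br (e 0) (e 2) = ω₁ • e 0)
    (h12 : br (e 1) (e 2) = ((1/2) * θ₁) • e 1 + ((1/2) * θ₂) • e 2)
    (nabla : V →ₗ[ℝ] V →ₗ[ℝ] V)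
    (hKoszul : ∀ x y z : V, 2 * gB (nabla x y) z =
      gB (br x y) z + gB (br z x) y + gB (br z y) x) :
    ∀ x y z : V,
      gB (nabla x (phi y) - phi (nabla x y)) z =
        (x 1 * θ₁ - x 2 * θ₂) * (y 1 * z 1 + y 2 * z 2) +
          x 0 * ((y 1 * z 0 + y 0 * z 1) * ω₁ + (y 2 * z 0 + y 0 * z 2) * ω₂) := by
  
  have hdiag : ∀ v : V, br v v = 0 := by
    intro v
    funext i
    have h := congrFun (hskew v v) i
    simp only [Pi.neg_apply] at h
    have : br v v i = 0 := by linarith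
    simpa using this
  have h10 : br (e 1) (e 0) = ω₂ • e 0 := by rw [hskew, h01]; simp
  have h20 : br (e 2) (e 0) = (-ω₁) • e 0 := by rw [hskew, h02]; simp
  have h21 : br (e 2) (e 1) = (-((1/2) * θ₁)) • e 1 + (-((1/2) * θ₂)) • e 2 := by
    rw [hskew, h12]; simp; abel
  have hdec : ∀ v : V, v = v 0 • e 0 + v 1 • e 1 + v 2 • e 2 := by
    intro v; funext i; fin_cases i <;> simp [e, Pi.single_apply]
  have hbr : ∀ x y : V, br x y =
      ![(x 1 * y 0 - x 0 * y 1) * ω₂ + (x 0 * y 2 - x 2 * y 0) * ω₁,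
        (x 1 * y 2 - x 2 * y 1) * ((1/2) * θ₁),
        (x 1 * y 2 - x 2 * y 1) * ((1/2) * θ₂)] := by
    intro x y
    conv_lhs => rw [hdec x, hdec y]
    simp only [map_add, map_smul, LinearMap.add_apply, LinearMap.smul_apply,
      h01, h02, h12, h10, h20, h21, hdiag, smul_zero, zero_add, add_zero,
      smul_add, smul_smul]
    funext i
    fin_cases i <;>
      simp [e, Pi.single_apply, Matrix.cons_val_zero, Matrix.cons_val_one,
        Matrix.head_cons] <;> ring
  intro x y z
  have gsub : gB (nabla x (phi y) - phi (nabla x y)) z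
      = gB (nabla x (phi y)) z - gB (phi (nabla x y)) z := by
    simp [gB]; ring
  have gphi : gB (phi (nabla x y)) z = gB (nabla x y) (phi z) := by
    simp [gB, phi]; ring
  have e1 := hKoszul x (phi y) z
  have e2 := hKoszul x y (phi z)
  rw [hbr, hbr, hbr] at e1
  rw [hbr, hbr, hbr] at e2
  rw [gsub, gphi]
  simp only [gB, phi, Matrix.cons_val_zero, Matrix.cons_val_one, Matrix.head_cons,
    Matrix.cons_val_two, Matrix.tail_cons] at e1 e2 ⊢
  linarith [e1, e2]
end
end

section
/- The curvature tensor R satisfies: R(e₀,e₁,e₁,e₀) = (1/2)θ₁ω₁ − ω₂², R(e₀,e₂,e₂,e₀) = −ω₁² + (1/2)θ₂ω₂, R(e₀,e₁,e₂,e₀) = (ω₁ − (1/2)θ₁)ω₂, and R(e₁,e₂,e₂,e₁) = −(1/4)(θ₁² − θ₂²). -/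
noncomputable section

/-- Two vectors are equal if they pair equally with the basis under `gB`. -/
lemma gB_e0 (v : V) : gB v (e 0) = v 0 := by simp [gB, e, Pi.single_apply]
lemma gB_e1 (v : V) : gB v (e 1) = v 1 := by simp [gB, e, Pi.single_apply]
lemma gB_e2 (v : V) : gB v (e 2) = -v 2 := by simp [gB, e, Pi.single_apply]

lemma vext (v w : V) (h0 : gB v (e 0) = gB w (e 0)) (h1 : gB v (e 1) = gB w (e 1))
    (h2 : gB v (e 2) = gB w (e 2)) : v = w := by
  rw [gB_e0, gB_e0] at h0; rw [gB_e1, gB_e1] at h1; rw [gB_e2, gB_e2] at h2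
  funext k; fin_cases k
  · exact h0
  · exact h1
  · simpa using h2

/-- the basic components of the curvature tensor `R`. -/
theorem statement4
    (θ₁ θ₂ ω₁ ω₂ : ℝ) (hcomm : θ₁ * ω₂ = θ₂ * ω₁)
    (br : V →ₗ[ℝ] V →ₗ[ℝ] V)
    (hskew : ∀ x y : V, br x y = - br y x)
    (h01 : br (e 0) (e 1) = (-ω₂) • e 0)
    (h02 : br (e 0) (e 2) = ω₁ • e 0)
    (h12 : br (e 1) (e 2) = ((1/2) * θ₁) • e 1 + ((1/2) * θ₂) • e 2)
    (nabla : V →ₗ[ℝ] V →ₗ[ℝ] V)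
    (hKoszul : ∀ x y z : V, 2 * gB (nabla x y) z =
      gB (br x y) z + gB (br z x) y + gB (br z y) x) :
    R4 br nabla (e 0) (e 1) (e 1) (e 0) = (1/2) * θ₁ * ω₁ - ω₂ ^ 2 ∧
    R4 br nabla (e 0) (e 2) (e 2) (e 0) = -ω₁ ^ 2 + (1/2) * θ₂ * ω₂ ∧
    R4 br nabla (e 0) (e 1) (e 2) (e 0) = (ω₁ - (1/2) * θ₁) * ω₂ ∧
    R4 br nabla (e 1) (e 2) (e 2) (e 1) = -((1/4) * (θ₁ ^ 2 - θ₂ ^ 2)) := by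
  have hdiag : ∀ x : V, br x x = 0 := by
    intro x
    have h := hskew x x
    have h2 : (2:ℝ) • br x x = 0 := by
      rw [two_smul]; nth_rewrite 1 [h]; abel
    simpa using (smul_eq_zero.mp h2).resolve_left (by norm_num)
  have hb10 : br (e 1) (e 0) = ω₂ • e 0 := by
    rw [hskew, h01]; module
  have hb20 : br (e 2) (e 0) = (-ω₁) • e 0 := by
    rw [hskew, h02]; module
  have hb21 : br (e 2) (e 1) = (-(1/2) * θ₁) • e 1 + (-(1/2) * θ₂) • e 2 := by
    rw [hskew, h12]; module
  have gnab : ∀ (x y : V) (k : Fin 3), gB (nabla x y) (e k) =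
      (gB (br x y) (e k) + gB (br (e k) x) y + gB (br (e k) y) x) / 2 := by
    intro x y k
    have := hKoszul x y (e k)
    linarith
  have n00 : nabla (e 0) (e 0) = ω₂ • e 1 + ω₁ • e 2 := by
    apply vext <;> rw [gnab] <;>
      simp only [hdiag, hb10, hb20, hb21, h01, h02, h12] <;>
      simp [gB, e, Pi.single_apply] <;> ring
  have n01 : nabla (e 0) (e 1) = (-ω₂) • e 0 := by
    apply vext <;> rw [gnab] <;>
      simp only [hdiag, hb10, hb20, hb21, h01, h02, h12] <;>
      simp [gB, e, Pi.single_apply] <;> ring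
  have n02 : nabla (e 0) (e 2) = ω₁ • e 0 := by
    apply vext <;> rw [gnab] <;>
      simp only [hdiag, hb10, hb20, hb21, h01, h02, h12] <;>
      simp [gB, e, Pi.single_apply] <;> ring
  have n10 : nabla (e 1) (e 0) = 0 := by
    apply vext <;> rw [gnab] <;>
      simp only [hdiag, hb10, hb20, hb21, h01, h02, h12] <;>
      simp [gB, e, Pi.single_apply] <;> ring
  have n11 : nabla (e 1) (e 1) = ((1/2) * θ₁) • e 2 := by
    apply vext <;> rw [gnab] <;>
      simp only [hdiag, hb10, hb20, hb21, h01, h02, h12] <;>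
      simp [gB, e, Pi.single_apply] <;> ring
  have n12 : nabla (e 1) (e 2) = ((1/2) * θ₁) • e 1 := by
    apply vext <;> rw [gnab] <;>
      simp only [hdiag, hb10, hb20, hb21, h01, h02, h12] <;>
      simp [gB, e, Pi.single_apply] <;> ring
  have n20 : nabla (e 2) (e 0) = 0 := by
    apply vext <;> rw [gnab] <;>
      simp only [hdiag, hb10, hb20, hb21, h01, h02, h12] <;>
      simp [gB, e, Pi.single_apply] <;> ring
  have n21 : nabla (e 2) (e 1) = (-(1/2) * θ₂) • e 2 := by
    apply vext <;> rw [gnab] <;>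
      simp only [hdiag, hb10, hb20, hb21, h01, h02, h12] <;>
      simp [gB, e, Pi.single_apply] <;> ring
  have n22 : nabla (e 2) (e 2) = (-(1/2) * θ₂) • e 1 := by
    apply vext <;> rw [gnab] <;>
      simp only [hdiag, hb10, hb20, hb21, h01, h02, h12] <;>
      simp [gB, e, Pi.single_apply] <;> ring
  refine ⟨?_, ?_, ?_, ?_⟩ <;>
    · simp only [R4, Rc, h01, h02, h12, map_add, map_smul, map_sub, map_zero,
        LinearMap.add_apply, LinearMap.smul_apply, LinearMap.sub_apply, LinearMap.zero_apply,
        n00, n01, n02, n10, n11, n12, n20, n21, n22, smul_zero, smul_smul]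
      simp [gB, e, Pi.single_apply, smul_eq_mul]
      ring
end
end

section
/- The Ricci tensor ρ satisfies: ρ(e₀,e₀) = (1/2)(θ₁ω₁ − θ₂ω₂) + (ω₁² − ω₂²), ρ(e₁,e₁) = (1/4)(θ₁² − θ₂²) + (1/2)θ₁ω₁ − ω₂², ρ(e₂,e₂) = −(1/4)(θ₁² − θ₂²) + (1/2)θ₂ω₂ − ω₁², and ρ(e₁,e₂) = (ω₁ − (1/2)θ₁)ω₂. -/
noncomputable section

lemma gB_add_left (x y z : V) : gB (x + y) z = gB x z + gB y z := by
  simp [gB]; ring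

lemma gB_add_right (x y z : V) : gB x (y + z) = gB x y + gB x z := by
  simp [gB]; ring

lemma gB_sub_left (x y z : V) : gB (x - y) z = gB x z - gB y z := by
  simp [gB]; ring

lemma gB_sub_right (x y z : V) : gB x (y - z) = gB x y - gB x z := by
  simp [gB]; ring

lemma gB_smul_left (c : ℝ) (x y : V) : gB (c • x) y = c * gB x y := by
  simp [gB]; ring

lemma gB_smul_right (c : ℝ) (x y : V) : gB x (c • y) = c * gB x y := by
  simp [gB]; ring

lemma gB_neg_left (x y : V) : gB (-x) y = -gB x y := by
  simp [gB]; ring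

lemma gB_zero_left (y : V) : gB 0 y = 0 := by simp [gB]

lemma gB_zero_right (x : V) : gB x 0 = 0 := by simp [gB]

lemma gB_e00 : gB (e 0) (e 0) = 1 := by simp [gB, e, Pi.single_apply]
lemma gB_e01 : gB (e 0) (e 1) = 0 := by simp [gB, e, Pi.single_apply]
lemma gB_e02 : gB (e 0) (e 2) = 0 := by simp [gB, e, Pi.single_apply]
lemma gB_e10 : gB (e 1) (e 0) = 0 := by simp [gB, e, Pi.single_apply]
lemma gB_e11 : gB (e 1) (e 1) = 1 := by simp [gB, e, Pi.single_apply]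
lemma gB_e12 : gB (e 1) (e 2) = 0 := by simp [gB, e, Pi.single_apply]
lemma gB_e20 : gB (e 2) (e 0) = 0 := by simp [gB, e, Pi.single_apply]
lemma gB_e21 : gB (e 2) (e 1) = 0 := by simp [gB, e, Pi.single_apply]
lemma gB_e22 : gB (e 2) (e 2) = -1 := by simp [gB, e, Pi.single_apply]

lemma gB_ext {v w : V} (h0 : gB v (e 0) = gB w (e 0)) (h1 : gB v (e 1) = gB w (e 1))
    (h2 : gB v (e 2) = gB w (e 2)) : v = w := by
  have c0 : ∀ u : V, gB u (e 0) = u 0 := fun u => by simp [gB, e, Pi.single_apply]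
  have c1 : ∀ u : V, gB u (e 1) = u 1 := fun u => by simp [gB, e, Pi.single_apply]
  have c2 : ∀ u : V, gB u (e 2) = -(u 2) := fun u => by simp [gB, e, Pi.single_apply]
  rw [c0, c0] at h0; rw [c1, c1] at h1; rw [c2, c2] at h2
  funext k; fin_cases k
  · exact h0
  · exact h1
  · show v 2 = w 2
    linarith

lemma vec_self_neg {x : V} (h : x = -x) : x = 0 := by
  funext k
  have := congrFun h k
  simp only [Pi.neg_apply] at this
  have h0 : x k = 0 := by linarith
  simpa using h0

/-- the basic components of the Ricci tensor `ρ`. -/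
theorem statement5
    (θ₁ θ₂ ω₁ ω₂ : ℝ) (hcomm : θ₁ * ω₂ = θ₂ * ω₁)
    (br : V →ₗ[ℝ] V →ₗ[ℝ] V)
    (hskew : ∀ x y : V, br x y = - br y x)
    (h01 : br (e 0) (e 1) = (-ω₂) • e 0)
    (h02 : br (e 0) (e 2) = ω₁ • e 0)
    (h12 : br (e 1) (e 2) = ((1/2) * θ₁) • e 1 + ((1/2) * θ₂) • e 2)
    (nabla : V →ₗ[ℝ] V →ₗ[ℝ] V)
    (hKoszul : ∀ x y z : V, 2 * gB (nabla x y) z =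
      gB (br x y) z + gB (br z x) y + gB (br z y) x) :
    ric br nabla (e 0) (e 0) = (1/2) * (θ₁ * ω₁ - θ₂ * ω₂) + (ω₁ ^ 2 - ω₂ ^ 2) ∧
    ric br nabla (e 1) (e 1) = (1/4) * (θ₁ ^ 2 - θ₂ ^ 2) + (1/2) * θ₁ * ω₁ - ω₂ ^ 2 ∧
    ric br nabla (e 2) (e 2) = -((1/4) * (θ₁ ^ 2 - θ₂ ^ 2)) + (1/2) * θ₂ * ω₂ - ω₁ ^ 2 ∧
    ric br nabla (e 1) (e 2) = (ω₁ - (1/2) * θ₁) * ω₂ := by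
  have key : ∀ x y z : V, gB (nabla x y) z =
      (gB (br x y) z + gB (br z x) y + gB (br z y) x) / 2 := fun x y z => by
    linarith [hKoszul x y z]
  have hb00 : br (e 0) (e 0) = 0 := vec_self_neg (hskew (e 0) (e 0))
  have hb11 : br (e 1) (e 1) = 0 := vec_self_neg (hskew (e 1) (e 1))
  have hb22 : br (e 2) (e 2) = 0 := vec_self_neg (hskew (e 2) (e 2))
  have h10 : br (e 1) (e 0) = ω₂ • e 0 := by rw [hskew (e 1) (e 0), h01]; module
  have h20 : br (e 2) (e 0) = (-ω₁) • e 0 := by rw [hskew (e 2) (e 0), h02]; module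
  have h21 : br (e 2) (e 1) = (-((1/2) * θ₁)) • e 1 + (-((1/2) * θ₂)) • e 2 := by
    rw [hskew (e 2) (e 1), h12]; module
  have n00 : nabla (e 0) (e 0) = ω₂ • e 1 + ω₁ • e 2 := by
    refine gB_ext ?_ ?_ ?_ <;>
      simp [key, hb00, hb11, hb22, h01, h02, h12, h10, h20, h21, gB_add_left, gB_add_right,
        gB_smul_left, gB_smul_right, gB_zero_left, gB_zero_right, gB_neg_left,
        gB_sub_left, gB_sub_right,
        gB_e00, gB_e01, gB_e02, gB_e10, gB_e11, gB_e12, gB_e20, gB_e21, gB_e22] <;>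
      ring
  have n01 : nabla (e 0) (e 1) = (-ω₂) • e 0 := by
    refine gB_ext ?_ ?_ ?_ <;>
      simp [key, hb00, hb11, hb22, h01, h02, h12, h10, h20, h21, gB_add_left, gB_add_right,
        gB_smul_left, gB_smul_right, gB_zero_left, gB_zero_right, gB_neg_left,
        gB_sub_left, gB_sub_right,
        gB_e00, gB_e01, gB_e02, gB_e10, gB_e11, gB_e12, gB_e20, gB_e21, gB_e22] <;>
      ring
  have n02 : nabla (e 0) (e 2) = ω₁ • e 0 := by
    refine gB_ext ?_ ?_ ?_ <;>
      simp [key, hb00, hb11, hb22, h01, h02, h12, h10, h20, h21, gB_add_left, gB_add_right,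
        gB_smul_left, gB_smul_right, gB_zero_left, gB_zero_right, gB_neg_left,
        gB_sub_left, gB_sub_right,
        gB_e00, gB_e01, gB_e02, gB_e10, gB_e11, gB_e12, gB_e20, gB_e21, gB_e22] <;>
      ring
  have n10 : nabla (e 1) (e 0) = 0 := by
    refine gB_ext ?_ ?_ ?_ <;>
      simp [key, hb00, hb11, hb22, h01, h02, h12, h10, h20, h21, gB_add_left, gB_add_right,
        gB_smul_left, gB_smul_right, gB_zero_left, gB_zero_right, gB_neg_left,
        gB_sub_left, gB_sub_right,
        gB_e00, gB_e01, gB_e02, gB_e10, gB_e11, gB_e12, gB_e20, gB_e21, gB_e22] <;>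
      ring
  have n11 : nabla (e 1) (e 1) = ((1/2) * θ₁) • e 2 := by
    refine gB_ext ?_ ?_ ?_ <;>
      simp [key, hb00, hb11, hb22, h01, h02, h12, h10, h20, h21, gB_add_left, gB_add_right,
        gB_smul_left, gB_smul_right, gB_zero_left, gB_zero_right, gB_neg_left,
        gB_sub_left, gB_sub_right,
        gB_e00, gB_e01, gB_e02, gB_e10, gB_e11, gB_e12, gB_e20, gB_e21, gB_e22] <;>
      ring
  have n12 : nabla (e 1) (e 2) = ((1/2) * θ₁) • e 1 := by
    refine gB_ext ?_ ?_ ?_ <;>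
      simp [key, hb00, hb11, hb22, h01, h02, h12, h10, h20, h21, gB_add_left, gB_add_right,
        gB_smul_left, gB_smul_right, gB_zero_left, gB_zero_right, gB_neg_left,
        gB_sub_left, gB_sub_right,
        gB_e00, gB_e01, gB_e02, gB_e10, gB_e11, gB_e12, gB_e20, gB_e21, gB_e22] <;>
      ring
  have n20 : nabla (e 2) (e 0) = 0 := by
    refine gB_ext ?_ ?_ ?_ <;>
      simp [key, hb00, hb11, hb22, h01, h02, h12, h10, h20, h21, gB_add_left, gB_add_right,
        gB_smul_left, gB_smul_right, gB_zero_left, gB_zero_right, gB_neg_left,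
        gB_sub_left, gB_sub_right,
        gB_e00, gB_e01, gB_e02, gB_e10, gB_e11, gB_e12, gB_e20, gB_e21, gB_e22] <;>
      ring
  have n21 : nabla (e 2) (e 1) = (-((1/2) * θ₂)) • e 2 := by
    refine gB_ext ?_ ?_ ?_ <;>
      simp [key, hb00, hb11, hb22, h01, h02, h12, h10, h20, h21, gB_add_left, gB_add_right,
        gB_smul_left, gB_smul_right, gB_zero_left, gB_zero_right, gB_neg_left,
        gB_sub_left, gB_sub_right,
        gB_e00, gB_e01, gB_e02, gB_e10, gB_e11, gB_e12, gB_e20, gB_e21, gB_e22] <;>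
      ring
  have n22 : nabla (e 2) (e 2) = (-((1/2) * θ₂)) • e 1 := by
    refine gB_ext ?_ ?_ ?_ <;>
      simp [key, hb00, hb11, hb22, h01, h02, h12, h10, h20, h21, gB_add_left, gB_add_right,
        gB_smul_left, gB_smul_right, gB_zero_left, gB_zero_right, gB_neg_left,
        gB_sub_left, gB_sub_right,
        gB_e00, gB_e01, gB_e02, gB_e10, gB_e11, gB_e12, gB_e20, gB_e21, gB_e22] <;>
      ring
  refine ⟨?_, ?_, ?_, ?_⟩ <;>
  · simp only [ric, R4, Rc, hb00, hb11, hb22, h01, h02, h12, h10, h20, h21,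
      map_add, map_smul, map_sub, map_zero, map_neg,
      LinearMap.add_apply, LinearMap.smul_apply, LinearMap.sub_apply, LinearMap.zero_apply,
      LinearMap.neg_apply,
      n00, n01, n02, n10, n11, n12, n20, n21, n22,
      smul_add, smul_smul, smul_zero]
    simp [gB_add_left, gB_add_right, gB_sub_left, gB_sub_right, gB_smul_left, gB_smul_right,
      gB_neg_left, gB_zero_left, gB_zero_right,
      gB_e00, gB_e01, gB_e02, gB_e10, gB_e11, gB_e12, gB_e20, gB_e21, gB_e22]
    ring
end
end

section
/- The scalar curvature satisfies τ = (1/2)(θ₁² − θ₂²) + (θ₁ω₁ − θ₂ω₂) + 2(ω₁² − ω₂²). -/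
noncomputable section

lemma vecEq (v w : V) (h0 : v 0 = w 0) (h1 : v 1 = w 1) (h2 : v 2 = w 2) : v = w := by
  funext k; fin_cases k <;> assumption

set_option maxHeartbeats 4000000 in
/-- the scalar curvature `τ`. -/
theorem statement6
    (θ₁ θ₂ ω₁ ω₂ : ℝ) (hcomm : θ₁ * ω₂ = θ₂ * ω₁)
    (br : V →ₗ[ℝ] V →ₗ[ℝ] V)
    (hskew : ∀ x y : V, br x y = - br y x)
    (h01 : br (e 0) (e 1) = (-ω₂) • e 0)
    (h02 : br (e 0) (e 2) = ω₁ • e 0)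
    (h12 : br (e 1) (e 2) = ((1/2) * θ₁) • e 1 + ((1/2) * θ₂) • e 2)
    (nabla : V →ₗ[ℝ] V →ₗ[ℝ] V)
    (hKoszul : ∀ x y z : V, 2 * gB (nabla x y) z =
      gB (br x y) z + gB (br z x) y + gB (br z y) x) :
    scal br nabla = (1/2) * (θ₁ ^ 2 - θ₂ ^ 2) + (θ₁ * ω₁ - θ₂ * ω₂) + 2 * (ω₁ ^ 2 - ω₂ ^ 2) := by
  have hbii : ∀ x : V, br x x = 0 := by
    intro x
    have h := hskew x x
    have h2 : (2 : ℝ) • br x x = 0 := by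
      rw [two_smul]; nth_rw 1 [h]; exact neg_add_cancel _
    have := smul_eq_zero.mp h2
    simpa using this
  have hb00 : br (e 0) (e 0) = 0 := hbii _
  have hb11 : br (e 1) (e 1) = 0 := hbii _
  have hb22 : br (e 2) (e 2) = 0 := hbii _
  have hb10 : br (e 1) (e 0) = ω₂ • e 0 := by rw [hskew, h01]; module
  have hb20 : br (e 2) (e 0) = (-ω₁) • e 0 := by rw [hskew, h02]; module
  have hb21 : br (e 2) (e 1) = (-((1/2)*θ₁)) • e 1 + (-((1/2)*θ₂)) • e 2 := by
    rw [hskew, h12]; module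
  have hN00 : nabla (e 0) (e 0) = ω₂ • e 1 + ω₁ • e 2 := by
    refine vecEq _ _ ?_ ?_ ?_
    · have h := hKoszul (e 0) (e 0) (e 0)
      simp only [hb00, hb11, hb22, h01, h02, h12, hb10, hb20, hb21] at h
      simp [gB, e, Pi.single_apply] at h ⊢
      linarith
    · have h := hKoszul (e 0) (e 0) (e 1)
      simp only [hb00, hb11, hb22, h01, h02, h12, hb10, hb20, hb21] at h
      simp [gB, e, Pi.single_apply] at h ⊢
      linarith
    · have h := hKoszul (e 0) (e 0) (e 2)
      simp only [hb00, hb11, hb22, h01, h02, h12, hb10, hb20, hb21] at h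
      simp [gB, e, Pi.single_apply] at h ⊢
      linarith
  have hN01 : nabla (e 0) (e 1) = (-ω₂) • e 0 := by
    refine vecEq _ _ ?_ ?_ ?_
    · have h := hKoszul (e 0) (e 1) (e 0)
      simp only [hb00, hb11, hb22, h01, h02, h12, hb10, hb20, hb21] at h
      simp [gB, e, Pi.single_apply] at h ⊢
      linarith
    · have h := hKoszul (e 0) (e 1) (e 1)
      simp only [hb00, hb11, hb22, h01, h02, h12, hb10, hb20, hb21] at h
      simp [gB, e, Pi.single_apply] at h ⊢
      linarith
    · have h := hKoszul (e 0) (e 1) (e 2)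
      simp only [hb00, hb11, hb22, h01, h02, h12, hb10, hb20, hb21] at h
      simp [gB, e, Pi.single_apply] at h ⊢
      linarith
  have hN02 : nabla (e 0) (e 2) = ω₁ • e 0 := by
    refine vecEq _ _ ?_ ?_ ?_
    · have h := hKoszul (e 0) (e 2) (e 0)
      simp only [hb00, hb11, hb22, h01, h02, h12, hb10, hb20, hb21] at h
      simp [gB, e, Pi.single_apply] at h ⊢
      linarith
    · have h := hKoszul (e 0) (e 2) (e 1)
      simp only [hb00, hb11, hb22, h01, h02, h12, hb10, hb20, hb21] at h
      simp [gB, e, Pi.single_apply] at h ⊢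
      linarith
    · have h := hKoszul (e 0) (e 2) (e 2)
      simp only [hb00, hb11, hb22, h01, h02, h12, hb10, hb20, hb21] at h
      simp [gB, e, Pi.single_apply] at h ⊢
      linarith
  have hN10 : nabla (e 1) (e 0) = (0 : V) := by
    refine vecEq _ _ ?_ ?_ ?_
    · have h := hKoszul (e 1) (e 0) (e 0)
      simp only [hb00, hb11, hb22, h01, h02, h12, hb10, hb20, hb21] at h
      simp [gB, e, Pi.single_apply] at h ⊢
      linarith
    · have h := hKoszul (e 1) (e 0) (e 1)
      simp only [hb00, hb11, hb22, h01, h02, h12, hb10, hb20, hb21] at h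
      simp [gB, e, Pi.single_apply] at h ⊢
      linarith
    · have h := hKoszul (e 1) (e 0) (e 2)
      simp only [hb00, hb11, hb22, h01, h02, h12, hb10, hb20, hb21] at h
      simp [gB, e, Pi.single_apply] at h ⊢
      linarith
  have hN11 : nabla (e 1) (e 1) = ((1/2)*θ₁) • e 2 := by
    refine vecEq _ _ ?_ ?_ ?_
    · have h := hKoszul (e 1) (e 1) (e 0)
      simp only [hb00, hb11, hb22, h01, h02, h12, hb10, hb20, hb21] at h
      simp [gB, e, Pi.single_apply] at h ⊢
      linarith
    · have h := hKoszul (e 1) (e 1) (e 1)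
      simp only [hb00, hb11, hb22, h01, h02, h12, hb10, hb20, hb21] at h
      simp [gB, e, Pi.single_apply] at h ⊢
      linarith
    · have h := hKoszul (e 1) (e 1) (e 2)
      simp only [hb00, hb11, hb22, h01, h02, h12, hb10, hb20, hb21] at h
      simp [gB, e, Pi.single_apply] at h ⊢
      linarith
  have hN12 : nabla (e 1) (e 2) = ((1/2)*θ₁) • e 1 := by
    refine vecEq _ _ ?_ ?_ ?_
    · have h := hKoszul (e 1) (e 2) (e 0)
      simp only [hb00, hb11, hb22, h01, h02, h12, hb10, hb20, hb21] at h
      simp [gB, e, Pi.single_apply] at h ⊢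
      linarith
    · have h := hKoszul (e 1) (e 2) (e 1)
      simp only [hb00, hb11, hb22, h01, h02, h12, hb10, hb20, hb21] at h
      simp [gB, e, Pi.single_apply] at h ⊢
      linarith
    · have h := hKoszul (e 1) (e 2) (e 2)
      simp only [hb00, hb11, hb22, h01, h02, h12, hb10, hb20, hb21] at h
      simp [gB, e, Pi.single_apply] at h ⊢
      linarith
  have hN20 : nabla (e 2) (e 0) = (0 : V) := by
    refine vecEq _ _ ?_ ?_ ?_
    · have h := hKoszul (e 2) (e 0) (e 0)
      simp only [hb00, hb11, hb22, h01, h02, h12, hb10, hb20, hb21] at h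
      simp [gB, e, Pi.single_apply] at h ⊢
      linarith
    · have h := hKoszul (e 2) (e 0) (e 1)
      simp only [hb00, hb11, hb22, h01, h02, h12, hb10, hb20, hb21] at h
      simp [gB, e, Pi.single_apply] at h ⊢
      linarith
    · have h := hKoszul (e 2) (e 0) (e 2)
      simp only [hb00, hb11, hb22, h01, h02, h12, hb10, hb20, hb21] at h
      simp [gB, e, Pi.single_apply] at h ⊢
      linarith
  have hN21 : nabla (e 2) (e 1) = (-((1/2)*θ₂)) • e 2 := by
    refine vecEq _ _ ?_ ?_ ?_
    · have h := hKoszul (e 2) (e 1) (e 0)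
      simp only [hb00, hb11, hb22, h01, h02, h12, hb10, hb20, hb21] at h
      simp [gB, e, Pi.single_apply] at h ⊢
      linarith
    · have h := hKoszul (e 2) (e 1) (e 1)
      simp only [hb00, hb11, hb22, h01, h02, h12, hb10, hb20, hb21] at h
      simp [gB, e, Pi.single_apply] at h ⊢
      linarith
    · have h := hKoszul (e 2) (e 1) (e 2)
      simp only [hb00, hb11, hb22, h01, h02, h12, hb10, hb20, hb21] at h
      simp [gB, e, Pi.single_apply] at h ⊢
      linarith
  have hN22 : nabla (e 2) (e 2) = (-((1/2)*θ₂)) • e 1 := by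
    refine vecEq _ _ ?_ ?_ ?_
    · have h := hKoszul (e 2) (e 2) (e 0)
      simp only [hb00, hb11, hb22, h01, h02, h12, hb10, hb20, hb21] at h
      simp [gB, e, Pi.single_apply] at h ⊢
      linarith
    · have h := hKoszul (e 2) (e 2) (e 1)
      simp only [hb00, hb11, hb22, h01, h02, h12, hb10, hb20, hb21] at h
      simp [gB, e, Pi.single_apply] at h ⊢
      linarith
    · have h := hKoszul (e 2) (e 2) (e 2)
      simp only [hb00, hb11, hb22, h01, h02, h12, hb10, hb20, hb21] at h
      simp [gB, e, Pi.single_apply] at h ⊢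
      linarith
  unfold scal ric R4 Rc
  simp only [hb00, hb11, hb22, h01, h02, h12, hb10, hb20, hb21,
    map_add, map_smul, map_zero, LinearMap.add_apply, LinearMap.smul_apply,
    LinearMap.zero_apply,
    hN00, hN01, hN02, hN10, hN11, hN12, hN20, hN21, hN22,
    smul_add, smul_zero, smul_smul]
  simp [gB, e, Pi.single_apply]
  ring
end
end

section
/- The associated scalar curvature satisfies τ* = (2ω₁ − θ₁)ω₂. -/
noncomputable section

/-!
The bracket is skew-symmetric and bilinear, so it is determined by its three values on basis
pairs; since `g` is diagonal with signs `εᵢ = ±1`, the Koszul identity paired with `eᵢ` gives the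
`i`-th coordinate of `∇ₓy` directly. Both are then explicit polynomial maps, and `τ*` comes out as
`2ω₁ω₂ − (θ₁ω₂ + θ₂ω₁)/2`. The relation `θ₁ω₂ = θ₂ω₁`, which is the Jacobi identity of the
bracket, turns this into `(2ω₁ − θ₁)ω₂`.
-/

lemma V_ext {v w : V} (h0 : v 0 = w 0) (h1 : v 1 = w 1) (h2 : v 2 = w 2) : v = w := by
  funext i; fin_cases i <;> assumption

lemma eq_coord_smul_e (v : V) : v = v 0 • e 0 + v 1 • e 1 + v 2 • e 2 :=
  V_ext (by simp [e]) (by simp [e]) (by simp [e])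

lemma gB_e (v : V) (i : Fin 3) : gB v (e i) = eps i * v i := by
  fin_cases i <;> simp [gB, e, eps]

lemma eps_mul_self (i : Fin 3) : eps i * eps i = 1 := by
  fin_cases i <;> simp [eps]

lemma apply_eq_of_skew (br : V →ₗ[ℝ] V →ₗ[ℝ] V) (hskew : ∀ x y : V, br x y = - br y x)
    (x y : V) :
    br x y = (x 0 * y 1 - x 1 * y 0) • br (e 0) (e 1) + (x 0 * y 2 - x 2 * y 0) • br (e 0) (e 2)
      + (x 1 * y 2 - x 2 * y 1) • br (e 1) (e 2) := by
  have hdiag : ∀ v : V, br v v = 0 := fun v => by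
    have := hskew v v
    rwa [eq_neg_iff_add_eq_zero, ← two_smul ℝ, smul_eq_zero, or_iff_right two_ne_zero] at this
  rw [eq_coord_smul_e x, eq_coord_smul_e y]
  simp only [map_add, map_smul, LinearMap.add_apply, LinearMap.smul_apply, hdiag,
    hskew (e 1) (e 0), hskew (e 2) (e 0), hskew (e 2) (e 1)]
  simp only [e, Pi.add_apply, Pi.smul_apply, Pi.single_apply, smul_eq_mul, Fin.reduceEq, if_true,
    if_false]
  module

lemma coord_eq_of_koszul (br nabla : V →ₗ[ℝ] V →ₗ[ℝ] V)
    (hKoszul : ∀ x y z : V, 2 * gB (nabla x y) z =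
      gB (br x y) z + gB (br z x) y + gB (br z y) x) (x y : V) (i : Fin 3) :
    nabla x y i = eps i / 2 * (gB (br x y) (e i) + gB (br (e i) x) y + gB (br (e i) y) x) := by
  rw [← hKoszul, gB_e]
  linear_combination -(nabla x y i) * eps_mul_self i

section Bracket

variable (θ₁ θ₂ ω₁ ω₂ : ℝ)

def lieBr (x y : V) : V :=
  ![-ω₂ * (x 0 * y 1 - x 1 * y 0) + ω₁ * (x 0 * y 2 - x 2 * y 0),
    θ₁ / 2 * (x 1 * y 2 - x 2 * y 1), θ₂ / 2 * (x 1 * y 2 - x 2 * y 1)]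

def leviCivita (x y : V) : V :=
  ![-ω₂ * x 0 * y 1 + ω₁ * x 0 * y 2,
    ω₂ * x 0 * y 0 + θ₁ / 2 * x 1 * y 2 - θ₂ / 2 * x 2 * y 2,
    ω₁ * x 0 * y 0 + θ₁ / 2 * x 1 * y 1 - θ₂ / 2 * x 2 * y 1]

variable {θ₁ θ₂ ω₁ ω₂} (br nabla : V →ₗ[ℝ] V →ₗ[ℝ] V)

lemma apply_eq_lieBr (hskew : ∀ x y : V, br x y = - br y x)
    (h01 : br (e 0) (e 1) = (-ω₂) • e 0) (h02 : br (e 0) (e 2) = ω₁ • e 0)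
    (h12 : br (e 1) (e 2) = ((1/2) * θ₁) • e 1 + ((1/2) * θ₂) • e 2) (x y : V) :
    br x y = lieBr θ₁ θ₂ ω₁ ω₂ x y := by
  rw [apply_eq_of_skew br hskew, h01, h02, h12]
  apply V_ext <;>
    simp only [lieBr, e, Pi.add_apply, Pi.smul_apply, Pi.single_apply, smul_eq_mul,
      Matrix.cons_val_zero, Matrix.cons_val_one, Matrix.cons_val, Fin.reduceEq, if_true,
      if_false] <;>
    ring

lemma apply_eq_leviCivita (hbr : ∀ x y : V, br x y = lieBr θ₁ θ₂ ω₁ ω₂ x y)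
    (hKoszul : ∀ x y z : V, 2 * gB (nabla x y) z =
      gB (br x y) z + gB (br z x) y + gB (br z y) x) (x y : V) :
    nabla x y = leviCivita θ₁ θ₂ ω₁ ω₂ x y := by
  apply V_ext <;>
    simp only [coord_eq_of_koszul br nabla hKoszul, hbr, gB, lieBr, leviCivita, e, eps,
      Pi.single_apply, Matrix.cons_val_zero, Matrix.cons_val_one, Matrix.cons_val, Fin.reduceEq,
      if_true, if_false] <;>
    ring

lemma scalStar_eq (hbr : ∀ x y : V, br x y = lieBr θ₁ θ₂ ω₁ ω₂ x y)
    (hnabla : ∀ x y : V, nabla x y = leviCivita θ₁ θ₂ ω₁ ω₂ x y) :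
    scalStar br nabla = 2 * ω₁ * ω₂ - (θ₁ * ω₂ + θ₂ * ω₁) / 2 := by
  simp only [scalStar, ricStar, R4, Rc, hbr, hnabla, gB, phi, lieBr, leviCivita, e, Pi.sub_apply,
    Pi.single_apply, Matrix.cons_val_zero, Matrix.cons_val_one, Matrix.cons_val, Fin.reduceEq,
    if_true, if_false]
  ring

end Bracket

/-- the associated scalar curvature `τ* = (2ω₁ − θ₁)ω₂`. -/
theorem statement8
    (θ₁ θ₂ ω₁ ω₂ : ℝ) (hcomm : θ₁ * ω₂ = θ₂ * ω₁)
    (br : V →ₗ[ℝ] V →ₗ[ℝ] V)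
    (hskew : ∀ x y : V, br x y = - br y x)
    (h01 : br (e 0) (e 1) = (-ω₂) • e 0)
    (h02 : br (e 0) (e 2) = ω₁ • e 0)
    (h12 : br (e 1) (e 2) = ((1/2) * θ₁) • e 1 + ((1/2) * θ₂) • e 2)
    (nabla : V →ₗ[ℝ] V →ₗ[ℝ] V)
    (hKoszul : ∀ x y z : V, 2 * gB (nabla x y) z =
      gB (br x y) z + gB (br z x) y + gB (br z y) x) :
    scalStar br nabla = (2 * ω₁ - θ₁) * ω₂ := by
  have hbr := apply_eq_lieBr br hskew h01 h02 h12
  rw [scalStar_eq br nabla hbr (apply_eq_leviCivita br nabla hbr hKoszul)]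
  linear_combination hcomm / 2
end
end

section
/- The sectional curvatures of the basic 2-planes satisfy: k₀₁ := R(e₀,e₁,e₁,e₀)/(g(e₀,e₀)g(e₁,e₁) − g(e₀,e₁)²) = (1/2)θ₁ω₁ − ω₂² (a ξ-section), k₀₂ := R(e₀,e₂,e₂,e₀)/(g(e₀,e₀)g(e₂,e₂) − g(e₀,e₂)²) = ω₁² − (1/2)θ₂ω₂ (a ξ-section), and k₁₂ := R(e₁,e₂,e₂,e₁)/(g(e₁,e₁)g(e₂,e₂) − g(e₁,e₂)²) = (1/4)(θ₁² − θ₂²) (the φ-holomorphic section). -/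
noncomputable section

/-- the sectional curvatures of the basic 2-planes. -/
theorem statement9
    (θ₁ θ₂ ω₁ ω₂ : ℝ) (hcomm : θ₁ * ω₂ = θ₂ * ω₁)
    (br : V →ₗ[ℝ] V →ₗ[ℝ] V)
    (hskew : ∀ x y : V, br x y = - br y x)
    (h01 : br (e 0) (e 1) = (-ω₂) • e 0)
    (h02 : br (e 0) (e 2) = ω₁ • e 0)
    (h12 : br (e 1) (e 2) = ((1/2) * θ₁) • e 1 + ((1/2) * θ₂) • e 2)
    (nabla : V →ₗ[ℝ] V →ₗ[ℝ] V)
    (hKoszul : ∀ x y z : V, 2 * gB (nabla x y) z =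
      gB (br x y) z + gB (br z x) y + gB (br z y) x) :
    R4 br nabla (e 0) (e 1) (e 1) (e 0) /
        (gB (e 0) (e 0) * gB (e 1) (e 1) - gB (e 0) (e 1) ^ 2) =
      (1/2) * θ₁ * ω₁ - ω₂ ^ 2 ∧
    R4 br nabla (e 0) (e 2) (e 2) (e 0) /
        (gB (e 0) (e 0) * gB (e 2) (e 2) - gB (e 0) (e 2) ^ 2) =
      ω₁ ^ 2 - (1/2) * θ₂ * ω₂ ∧
    R4 br nabla (e 1) (e 2) (e 2) (e 1) /
        (gB (e 1) (e 1) * gB (e 2) (e 2) - gB (e 1) (e 2) ^ 2) =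
      (1/4) * (θ₁ ^ 2 - θ₂ ^ 2) := by
  -- basis component facts
  have he : ∀ v : V, v = ![gB v (e 0), gB v (e 1), -gB v (e 2)] := by
    intro v; funext k; fin_cases k <;> simp [gB, e, Pi.single_apply] <;> ring
  have hbr0 : ∀ x : V, br x x = 0 := by
    intro x
    have h2 : (2:ℝ) • br x x = 0 := by
      rw [two_smul]; nth_rewrite 1 [hskew x x]; abel
    have := congrArg (fun v => (2:ℝ)⁻¹ • v) h2
    simpa [smul_smul] using this
  have h10 : br (e 1) (e 0) = ω₂ • e 0 := by rw [hskew, h01]; module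
  have h20 : br (e 2) (e 0) = (-ω₁) • e 0 := by rw [hskew, h02]; module
  have h21 : br (e 2) (e 1) = (-(1/2 * θ₁)) • e 1 + (-(1/2 * θ₂)) • e 2 := by
    rw [hskew, h12]; module
  have comp : ∀ x y z : V, gB (nabla x y) z =
      (gB (br x y) z + gB (br z x) y + gB (br z y) x) / 2 := by
    intro x y z; have := hKoszul x y z; linarith
  have gsimp : ∀ (a b : ℝ) (v w u : V), gB (a • v + b • w) u = a * gB v u + b * gB w u := by
    intro a b v w u; simp [gB]; ring
  have gss : ∀ (a : ℝ) (v u : V), gB (a • v) u = a * gB v u := by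
    intro a v u; simp [gB]; ring
  have gadd : ∀ (v w u : V), gB (v + w) u = gB v u + gB w u := by
    intro v w u; simp [gB]; ring
  have gsub : ∀ (v w u : V), gB (v - w) u = gB v u - gB w u := by
    intro v w u; simp [gB]; ring
  have g00 : gB (e 0) (e 0) = 1 := by simp [gB, e, Pi.single_apply]
  have g11 : gB (e 1) (e 1) = 1 := by simp [gB, e, Pi.single_apply]
  have g22 : gB (e 2) (e 2) = -1 := by simp [gB, e, Pi.single_apply]
  have g01 : gB (e 0) (e 1) = 0 := by simp [gB, e, Pi.single_apply]
  have g02 : gB (e 0) (e 2) = 0 := by simp [gB, e, Pi.single_apply]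
  have g12 : gB (e 1) (e 2) = 0 := by simp [gB, e, Pi.single_apply]
  have g10 : gB (e 1) (e 0) = 0 := by simp [gB, e, Pi.single_apply]
  have g20 : gB (e 2) (e 0) = 0 := by simp [gB, e, Pi.single_apply]
  have g21 : gB (e 2) (e 1) = 0 := by simp [gB, e, Pi.single_apply]
  have g0 : ∀ v : V, gB 0 v = 0 := by intro v; simp [gB]
  have hvec : ∀ a b c : ℝ, a • e 0 + b • e 1 + c • e 2 = ![a, b, c] := by
    intro a b c; funext k; fin_cases k <;> simp [e, Pi.single_apply]
  have n00 : nabla (e 0) (e 0) = (0:ℝ) • e 0 + (ω₂:ℝ) • e 1 + (ω₁:ℝ) • e 2 := by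
    rw [he (nabla (e 0) (e 0)), hvec]
    simp only [comp, hbr0, h01, h02, h12, h10, h20, h21, g0, gss, gsimp,
      g00, g11, g22, g01, g02, g12, g10, g20, g21]
    funext k; fin_cases k <;> norm_num
  have n01 : nabla (e 0) (e 1) = (-ω₂:ℝ) • e 0 + (0:ℝ) • e 1 + (0:ℝ) • e 2 := by
    rw [he (nabla (e 0) (e 1)), hvec]
    simp only [comp, hbr0, h01, h02, h12, h10, h20, h21, g0, gss, gsimp,
      g00, g11, g22, g01, g02, g12, g10, g20, g21]
    funext k; fin_cases k <;> norm_num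
  have n02 : nabla (e 0) (e 2) = (ω₁:ℝ) • e 0 + (0:ℝ) • e 1 + (0:ℝ) • e 2 := by
    rw [he (nabla (e 0) (e 2)), hvec]
    simp only [comp, hbr0, h01, h02, h12, h10, h20, h21, g0, gss, gsimp,
      g00, g11, g22, g01, g02, g12, g10, g20, g21]
    funext k; fin_cases k <;> norm_num
  have n10 : nabla (e 1) (e 0) = (0:ℝ) • e 0 + (0:ℝ) • e 1 + (0:ℝ) • e 2 := by
    rw [he (nabla (e 1) (e 0)), hvec]
    simp only [comp, hbr0, h01, h02, h12, h10, h20, h21, g0, gss, gsimp,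
      g00, g11, g22, g01, g02, g12, g10, g20, g21]
    funext k; fin_cases k <;> norm_num
  have n11 : nabla (e 1) (e 1) = (0:ℝ) • e 0 + (0:ℝ) • e 1 + ((1/2)*θ₁:ℝ) • e 2 := by
    rw [he (nabla (e 1) (e 1)), hvec]
    simp only [comp, hbr0, h01, h02, h12, h10, h20, h21, g0, gss, gsimp,
      g00, g11, g22, g01, g02, g12, g10, g20, g21]
    funext k; fin_cases k <;> norm_num
  have n12 : nabla (e 1) (e 2) = (0:ℝ) • e 0 + ((1/2)*θ₁:ℝ) • e 1 + (0:ℝ) • e 2 := by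
    rw [he (nabla (e 1) (e 2)), hvec]
    simp only [comp, hbr0, h01, h02, h12, h10, h20, h21, g0, gss, gsimp,
      g00, g11, g22, g01, g02, g12, g10, g20, g21]
    funext k; fin_cases k <;> norm_num
  have n20 : nabla (e 2) (e 0) = (0:ℝ) • e 0 + (0:ℝ) • e 1 + (0:ℝ) • e 2 := by
    rw [he (nabla (e 2) (e 0)), hvec]
    simp only [comp, hbr0, h01, h02, h12, h10, h20, h21, g0, gss, gsimp,
      g00, g11, g22, g01, g02, g12, g10, g20, g21]
    funext k; fin_cases k <;> norm_num
  have n21 : nabla (e 2) (e 1) = (0:ℝ) • e 0 + (0:ℝ) • e 1 + (-((1/2)*θ₂):ℝ) • e 2 := by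
    rw [he (nabla (e 2) (e 1)), hvec]
    simp only [comp, hbr0, h01, h02, h12, h10, h20, h21, g0, gss, gsimp,
      g00, g11, g22, g01, g02, g12, g10, g20, g21]
    funext k; fin_cases k <;> norm_num
  have n22 : nabla (e 2) (e 2) = (0:ℝ) • e 0 + (-((1/2)*θ₂):ℝ) • e 1 + (0:ℝ) • e 2 := by
    rw [he (nabla (e 2) (e 2)), hvec]
    simp only [comp, hbr0, h01, h02, h12, h10, h20, h21, g0, gss, gsimp,
      g00, g11, g22, g01, g02, g12, g10, g20, g21]
    funext k; fin_cases k <;> norm_num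
  refine ⟨?_, ?_, ?_⟩
  · simp only [R4, Rc, h01, map_add, map_smul, LinearMap.add_apply, LinearMap.smul_apply,
      n00, n01, n02, n10, n11, n12, n20, n21, n22, smul_add, smul_smul]
    simp only [gadd, gsub, gss, g00, g11, g22, g01, g02, g12, g10, g20, g21]
    norm_num
    ring
  · simp only [R4, Rc, h02, map_add, map_smul, LinearMap.add_apply, LinearMap.smul_apply,
      n00, n01, n02, n10, n11, n12, n20, n21, n22, smul_add, smul_smul]
    simp only [gadd, gsub, gss, g00, g11, g22, g01, g02, g12, g10, g20, g21]
    norm_num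
    rw [div_neg, div_one]
    ring
  · simp only [R4, Rc, h12, map_add, map_smul, LinearMap.add_apply, LinearMap.smul_apply,
      n00, n01, n02, n10, n11, n12, n20, n21, n22, smul_add, smul_smul]
    simp only [gadd, gsub, gss, g00, g11, g22, g01, g02, g12, g10, g20, g21]
    norm_num
    ring
end
end

section
/- The square norms of ∇η and ∇ξ satisfy ‖∇η‖² = ‖∇ξ‖² = −(ω₁² − ω₂²). -/
noncomputable section

/-- Connection coefficients table. -/
def Mnab (θ₁ θ₂ ω₁ ω₂ : ℝ) : Fin 3 → Fin 3 → Fin 3 → ℝ :=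
  ![![![0, ω₂, ω₁], ![-ω₂, 0, 0], ![ω₁, 0, 0]],
    ![![0, 0, 0], ![0, 0, θ₁/2], ![0, θ₁/2, 0]],
    ![![0, 0, 0], ![0, 0, -θ₂/2], ![0, -θ₂/2, 0]]]

set_option maxHeartbeats 2000000 in
/-- the square norms of `∇η` and `∇ξ` equal `−(ω₁² − ω₂²)`. -/
theorem statement11
    (θ₁ θ₂ ω₁ ω₂ : ℝ) (hcomm : θ₁ * ω₂ = θ₂ * ω₁)
    (br : V →ₗ[ℝ] V →ₗ[ℝ] V)
    (hskew : ∀ x y : V, br x y = - br y x)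
    (h01 : br (e 0) (e 1) = (-ω₂) • e 0)
    (h02 : br (e 0) (e 2) = ω₁ • e 0)
    (h12 : br (e 1) (e 2) = ((1/2) * θ₁) • e 1 + ((1/2) * θ₂) • e 2)
    (nabla : V →ₗ[ℝ] V →ₗ[ℝ] V)
    (hKoszul : ∀ x y z : V, 2 * gB (nabla x y) z =
      gB (br x y) z + gB (br z x) y + gB (br z y) x) :
    (∑ i : Fin 3, ∑ k : Fin 3,
        eps i * eps k * (-(eta (nabla (e i) (e k)))) ^ 2) = -(ω₁ ^ 2 - ω₂ ^ 2) ∧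
    (∑ i : Fin 3,
        eps i * gB (nabla (e i) (e 0)) (nabla (e i) (e 0))) = -(ω₁ ^ 2 - ω₂ ^ 2) := by
  have hzz : ∀ x : V, br x x = 0 := by
    intro x
    have h := hskew x x
    funext k
    have hk := congrFun h k
    simp only [Pi.neg_apply] at hk
    have h0 : (0:V) k = 0 := rfl
    rw [h0]; linarith
  have h10 : br (e 1) (e 0) = ω₂ • e 0 := by rw [hskew, h01]; module
  have h20 : br (e 2) (e 0) = (-ω₁) • e 0 := by rw [hskew, h02]; module
  have h21 : br (e 2) (e 1) = (-((1/2) * θ₁)) • e 1 + (-((1/2) * θ₂)) • e 2 := by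
    rw [hskew, h12]; module
  simp only [e] at h01 h02 h12 h10 h20 h21
  have key : ∀ i j k : Fin 3, nabla (e i) (e j) k = Mnab θ₁ θ₂ ω₁ ω₂ i j k := by
    intro i j k
    have h := hKoszul (e i) (e j) (e k)
    fin_cases i <;> fin_cases j <;> fin_cases k <;>
      simp [gB, e, Mnab, hzz, h01, h02, h12, h10, h20, h21, Pi.single_apply,
        Matrix.vecHead, Matrix.vecTail] at h ⊢ <;>
      linarith
  constructor
  · simp only [Fin.sum_univ_three, eta, eps, key]
    simp [Mnab, Matrix.vecHead, Matrix.vecTail]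
    ring
  · simp only [Fin.sum_univ_three, gB, eps, key]
    simp [Mnab, Matrix.vecHead, Matrix.vecTail]
    ring
end
end

section
/- The φB-connection vanishes identically on left-invariant vector fields: for all x, y ∈ V, ∇ₓy + (1/2)[(∇ₓφ)(φy) + ((∇ₓη)(y))·ξ] − η(y)·∇ₓξ = 0, where (∇ₓφ)(w) := ∇ₓ(φw) − φ(∇ₓw) and (∇ₓη)(y) := −η(∇ₓy). -/
noncomputable section

/-- the φB-connection
`Ḋₓy = ∇ₓy + ½[(∇ₓφ)(φy) + ((∇ₓη)y)·ξ] − η(y)·∇ₓξ` vanishes identically,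
where `(∇ₓφ)(w) = ∇ₓ(φw) − φ(∇ₓw)`, `(∇ₓη)(y) = −η(∇ₓy)`, `ξ = e₀`. -/
theorem statement12
    (θ₁ θ₂ ω₁ ω₂ : ℝ) (hcomm : θ₁ * ω₂ = θ₂ * ω₁)
    (br : V →ₗ[ℝ] V →ₗ[ℝ] V)
    (hskew : ∀ x y : V, br x y = - br y x)
    (h01 : br (e 0) (e 1) = (-ω₂) • e 0)
    (h02 : br (e 0) (e 2) = ω₁ • e 0)
    (h12 : br (e 1) (e 2) = ((1/2) * θ₁) • e 1 + ((1/2) * θ₂) • e 2)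
    (nabla : V →ₗ[ℝ] V →ₗ[ℝ] V)
    (hKoszul : ∀ x y z : V, 2 * gB (nabla x y) z =
      gB (br x y) z + gB (br z x) y + gB (br z y) x) :
    ∀ x y : V,
      nabla x y +
          ((1:ℝ)/2) • ((nabla x (phi (phi y)) - phi (nabla x (phi y))) +
            (-(eta (nabla x y))) • e 0) -
          eta y • nabla x (e 0) = 0 := by
  have hexp : ∀ v : V, v = v 0 • e 0 + v 1 • e 1 + v 2 • e 2 := by
    intro v; funext k; fin_cases k <;> simp [e, Pi.single_apply]
  have hself : ∀ x : V, br x x = 0 := by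
    intro x
    have h := hskew x x
    have h2 : (2:ℝ) • br x x = 0 := by rw [two_smul]; nth_rw 2 [h]; simp
    simpa using (smul_eq_zero.mp h2).resolve_left (by norm_num)
  have h10 : br (e 1) (e 0) = ω₂ • e 0 := by
    rw [hskew, h01, neg_smul, neg_neg]
  have h20 : br (e 2) (e 0) = (-ω₁) • e 0 := by
    rw [hskew, h02, ← neg_smul]
  have h21 : br (e 2) (e 1) = (-((1/2) * θ₁)) • e 1 + (-((1/2) * θ₂)) • e 2 := by
    rw [hskew, h12, neg_add, ← neg_smul, ← neg_smul]
  -- determination of nabla by components against the basis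
  have nab : ∀ i j : Fin 3, ∀ t : V,
      2 * gB (nabla (e i) (e j)) (e 0) = 2 * gB t (e 0) →
      2 * gB (nabla (e i) (e j)) (e 1) = 2 * gB t (e 1) →
      2 * gB (nabla (e i) (e j)) (e 2) = 2 * gB t (e 2) →
      nabla (e i) (e j) = t := by
    intro i j t h0 h1 h2
    simp [gB, e, Pi.single_apply] at h0 h1 h2
    funext k
    fin_cases k
    · exact h0
    · exact h1
    · exact h2
  have n00 : nabla (e 0) (e 0) = ω₂ • e 1 + ω₁ • e 2 := by
    refine nab _ _ _ ?_ ?_ ?_ <;> rw [hKoszul] <;>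
      simp only [hself, h01, h02, h12, h10, h20, h21] <;>
      simp [gB, e, Pi.single_apply] <;> ring
  have n01 : nabla (e 0) (e 1) = (-ω₂) • e 0 := by
    refine nab _ _ _ ?_ ?_ ?_ <;> rw [hKoszul] <;>
      simp only [hself, h01, h02, h12, h10, h20, h21] <;>
      simp [gB, e, Pi.single_apply] <;> ring
  have n02 : nabla (e 0) (e 2) = ω₁ • e 0 := by
    refine nab _ _ _ ?_ ?_ ?_ <;> rw [hKoszul] <;>
      simp only [hself, h01, h02, h12, h10, h20, h21] <;>
      simp [gB, e, Pi.single_apply] <;> ring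
  have n10 : nabla (e 1) (e 0) = 0 := by
    refine nab _ _ _ ?_ ?_ ?_ <;> rw [hKoszul] <;>
      simp only [hself, h01, h02, h12, h10, h20, h21] <;>
      simp [gB, e, Pi.single_apply] <;> ring
  have n11 : nabla (e 1) (e 1) = ((1/2) * θ₁) • e 2 := by
    refine nab _ _ _ ?_ ?_ ?_ <;> rw [hKoszul] <;>
      simp only [hself, h01, h02, h12, h10, h20, h21] <;>
      simp [gB, e, Pi.single_apply] <;> ring
  have n12 : nabla (e 1) (e 2) = ((1/2) * θ₁) • e 1 := by
    refine nab _ _ _ ?_ ?_ ?_ <;> rw [hKoszul] <;>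
      simp only [hself, h01, h02, h12, h10, h20, h21] <;>
      simp [gB, e, Pi.single_apply] <;> ring
  have n20 : nabla (e 2) (e 0) = 0 := by
    refine nab _ _ _ ?_ ?_ ?_ <;> rw [hKoszul] <;>
      simp only [hself, h01, h02, h12, h10, h20, h21] <;>
      simp [gB, e, Pi.single_apply] <;> ring
  have n21 : nabla (e 2) (e 1) = (-((1/2) * θ₂)) • e 2 := by
    refine nab _ _ _ ?_ ?_ ?_ <;> rw [hKoszul] <;>
      simp only [hself, h01, h02, h12, h10, h20, h21] <;>
      simp [gB, e, Pi.single_apply] <;> ring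
  have n22 : nabla (e 2) (e 2) = (-((1/2) * θ₂)) • e 1 := by
    refine nab _ _ _ ?_ ?_ ?_ <;> rw [hKoszul] <;>
      simp only [hself, h01, h02, h12, h10, h20, h21] <;>
      simp [gB, e, Pi.single_apply] <;> ring
  -- linearity of phi and eta
  have phi_add : ∀ a b : V, phi (a + b) = phi a + phi b := by
    intro a b; funext k; fin_cases k <;> simp [phi] <;> ring
  have phi_smul : ∀ (c : ℝ) (a : V), phi (c • a) = c • phi a := by
    intro c a; funext k; fin_cases k <;> simp [phi] <;> ring
  have pe0 : phi (e 0) = 0 := by funext k; fin_cases k <;> simp [phi, e, Pi.single_apply]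
  have pe1 : phi (e 1) = e 2 := by funext k; fin_cases k <;> simp [phi, e, Pi.single_apply]
  have pe2 : phi (e 2) = -e 1 := by funext k; fin_cases k <;> simp [phi, e, Pi.single_apply]
  have phi_zero : phi 0 = 0 := by funext k; fin_cases k <;> simp [phi]
  have phi_neg : ∀ a : V, phi (-a) = - phi a := by
    intro a; funext k; fin_cases k <;> simp [phi]
  have eta_add : ∀ a b : V, eta (a + b) = eta a + eta b := by intro a b; simp [eta]
  have eta_smul : ∀ (c : ℝ) (a : V), eta (c • a) = c * eta a := by intro c a; simp [eta]
  have eta_neg : ∀ a : V, eta (-a) = - eta a := by intro a; simp [eta]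
  have ee0 : eta (e 0) = 1 := by simp [eta, e, Pi.single_apply]
  have ee1 : eta (e 1) = 0 := by simp [eta, e, Pi.single_apply]
  have ee2 : eta (e 2) = 0 := by simp [eta, e, Pi.single_apply]
  have eta_zero : eta 0 = 0 := by simp [eta]
  intro x y
  rw [hexp x, hexp y]
  simp only [map_add, map_smul, map_neg, LinearMap.add_apply, LinearMap.smul_apply,
    LinearMap.neg_apply, phi_add, phi_smul, phi_neg, pe0, pe1, pe2, phi_zero,
    smul_zero, map_zero, LinearMap.zero_apply, n00, n01, n02, n10, n11, n12, n20, n21, n22,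
    eta_add, eta_smul, eta_neg, ee0, ee1, ee2, eta_zero, smul_neg, neg_neg, smul_add,
    neg_add_rev, neg_zero, add_zero, zero_add, mul_zero, mul_one, zero_smul, mul_neg]
  module
end
end

section
/- The curvature vanishes identically (R(x,y)z = 0 for all x, y, z ∈ V) if and only if there exists ε ∈ {−1, 1} such that either (θ₁ = εθ₂ and θ₁ = 2ω₁ and ω₁ = εω₂), or (θ₁ = εθ₂ and ω₁ = 0 and ω₂ = 0). -/
noncomputable section

set_option maxHeartbeats 4000000 in
/-- flatness criterion. -/
theorem statement13
    (θ₁ θ₂ ω₁ ω₂ : ℝ) (hcomm : θ₁ * ω₂ = θ₂ * ω₁)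
    (br : V →ₗ[ℝ] V →ₗ[ℝ] V)
    (hskew : ∀ x y : V, br x y = - br y x)
    (h01 : br (e 0) (e 1) = (-ω₂) • e 0)
    (h02 : br (e 0) (e 2) = ω₁ • e 0)
    (h12 : br (e 1) (e 2) = ((1/2) * θ₁) • e 1 + ((1/2) * θ₂) • e 2)
    (nabla : V →ₗ[ℝ] V →ₗ[ℝ] V)
    (hKoszul : ∀ x y z : V, 2 * gB (nabla x y) z =
      gB (br x y) z + gB (br z x) y + gB (br z y) x) :
    (∀ x y z : V, Rc br nabla x y z = 0) ↔
      ∃ ε : ℝ, (ε = 1 ∨ ε = -1) ∧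
        ((θ₁ = ε * θ₂ ∧ θ₁ = 2 * ω₁ ∧ ω₁ = ε * ω₂) ∨
         (θ₁ = ε * θ₂ ∧ ω₁ = 0 ∧ ω₂ = 0)) := by
  classical
  -- explicit form of the basis vectors
  have e0 : (e 0 : V) = ![1,0,0] := by funext m; fin_cases m <;> simp [e, Pi.single_apply]
  have e1 : (e 1 : V) = ![0,1,0] := by funext m; fin_cases m <;> simp [e, Pi.single_apply]
  have e2 : (e 2 : V) = ![0,0,1] := by funext m; fin_cases m <;> simp [e, Pi.single_apply]
  have vext : ∀ a b : V, a 0 = b 0 → a 1 = b 1 → a 2 = b 2 → a = b := by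
    intro a b p0 p1 p2; funext m; fin_cases m <;> assumption
  have hx : ∀ x : V, x = x 0 • e 0 + x 1 • e 1 + x 2 • e 2 := by
    intro x; funext m; fin_cases m <;> simp [e, Pi.single_apply]
  -- the bracket of e i with e i is zero, and the skew values
  have h00 : br (e 0) (e 0) = 0 := by
    funext m; have := congrFun (hskew (e 0) (e 0)) m
    simp only [Pi.neg_apply] at this; simp only [Pi.zero_apply]; linarith
  have h11 : br (e 1) (e 1) = 0 := by
    funext m; have := congrFun (hskew (e 1) (e 1)) m
    simp only [Pi.neg_apply] at this; simp only [Pi.zero_apply]; linarith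
  have h22 : br (e 2) (e 2) = 0 := by
    funext m; have := congrFun (hskew (e 2) (e 2)) m
    simp only [Pi.neg_apply] at this; simp only [Pi.zero_apply]; linarith
  have h10 : br (e 1) (e 0) = ω₂ • e 0 := by rw [hskew, h01]; funext m; simp
  have h20 : br (e 2) (e 0) = (-ω₁) • e 0 := by rw [hskew, h02]; funext m; simp
  have h21 : br (e 2) (e 1) = (-(1/2) * θ₁) • e 1 + (-(1/2) * θ₂) • e 2 := by
    rw [hskew, h12]; funext m; simp; ring
  -- general formula for the bracket
  have hBr : ∀ x y : V, br x y = ((-ω₂)*(x 0*y 1 - x 1*y 0) + ω₁*(x 0*y 2 - x 2*y 0)) • e 0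
      + ((1/2)*θ₁*(x 1*y 2 - x 2*y 1)) • e 1 + ((1/2)*θ₂*(x 1*y 2 - x 2*y 1)) • e 2 := by
    intro x y
    conv_lhs => rw [hx x, hx y]
    simp only [map_add, map_smul, LinearMap.add_apply, LinearMap.smul_apply,
      h00, h01, h02, h10, h11, h12, h20, h21, h22, smul_smul, smul_zero, smul_add]
    funext m
    fin_cases m <;> simp [e, Pi.single_apply] <;> ring
  -- component formulas for the bracket
  have hB0 : ∀ x y : V, br x y 0 = (-ω₂)*(x 0*y 1 - x 1*y 0) + ω₁*(x 0*y 2 - x 2*y 0) := by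
    intro x y; rw [hBr x y]
    simp [e0, e1, e2]
  have hB1 : ∀ x y : V, br x y 1 = (1/2)*θ₁*(x 1*y 2 - x 2*y 1) := by
    intro x y; rw [hBr x y]
    simp [e0, e1, e2]
  have hB2 : ∀ x y : V, br x y 2 = (1/2)*θ₂*(x 1*y 2 - x 2*y 1) := by
    intro x y; rw [hBr x y]
    simp [e0, e1, e2]
  -- component formulas for the connection, from the Koszul identity
  have key : ∀ x y : V,
      (nabla x y 0 = -ω₂*(x 0)*(y 1) + ω₁*(x 0)*(y 2)) ∧
      (nabla x y 1 = ω₂*(x 0)*(y 0) + (1/2)*θ₁*(x 1)*(y 2) - (1/2)*θ₂*(x 2)*(y 2)) ∧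
      (nabla x y 2 = ω₁*(x 0)*(y 0) + (1/2)*θ₁*(x 1)*(y 1) - (1/2)*θ₂*(x 2)*(y 1)) := by
    intro x y
    have k0 := hKoszul x y (e 0)
    have k1 := hKoszul x y (e 1)
    have k2 := hKoszul x y (e 2)
    rw [hBr x y, hBr (e 0) x, hBr (e 0) y] at k0
    rw [hBr x y, hBr (e 1) x, hBr (e 1) y] at k1
    rw [hBr x y, hBr (e 2) x, hBr (e 2) y] at k2
    simp only [gB, e0, e1, e2, Pi.add_apply, Pi.smul_apply, smul_eq_mul,
      Matrix.cons_val_zero, Matrix.cons_val_one, Matrix.head_cons,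
      Matrix.cons_val_two, Matrix.tail_cons] at k0 k1 k2
    ring_nf at k0 k1 k2
    refine ⟨by linarith, by linarith, by linarith⟩
  have hN0 : ∀ x y : V, nabla x y 0 = -ω₂*(x 0)*(y 1) + ω₁*(x 0)*(y 2) :=
    fun x y => (key x y).1
  have hN1 : ∀ x y : V, nabla x y 1 = ω₂*(x 0)*(y 0) + (1/2)*θ₁*(x 1)*(y 2) - (1/2)*θ₂*(x 2)*(y 2) :=
    fun x y => (key x y).2.1
  have hN2 : ∀ x y : V, nabla x y 2 = ω₁*(x 0)*(y 0) + (1/2)*θ₁*(x 1)*(y 1) - (1/2)*θ₂*(x 2)*(y 1) :=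
    fun x y => (key x y).2.2
  constructor
  · -- flatness implies the algebraic conditions
    intro hflat
    have eA := congrFun (hflat (e 0) (e 1) (e 1)) 0
    have eB := congrFun (hflat (e 0) (e 1) (e 2)) 0
    have eC := congrFun (hflat (e 0) (e 2) (e 1)) 0
    have eD := congrFun (hflat (e 0) (e 2) (e 2)) 0
    have eE := congrFun (hflat (e 1) (e 2) (e 1)) 2
    simp only [Rc, Pi.sub_apply, Pi.zero_apply, hN0, hN1, hN2, hB0, hB1, hB2,
      e0, e1, e2, Matrix.cons_val_zero, Matrix.cons_val_one, Matrix.head_cons,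
      Matrix.cons_val_two, Matrix.tail_cons] at eA eB eC eD eE
    ring_nf at eA eB eC eD eE
    have hfacθ : (θ₁ - θ₂) * (θ₁ + θ₂) = 0 := by linear_combination (-4 : ℝ) * eE
    by_cases hw2 : ω₂ = 0
    · have hsq0 : ω₁ ^ 2 = 0 := by
        rw [hw2] at eD; linarith
      have hw1 : ω₁ = 0 := by
        exact pow_eq_zero_iff two_ne_zero |>.mp hsq0
      rcases mul_eq_zero.mp hfacθ with h | h
      · exact ⟨1, Or.inl rfl, Or.inr ⟨by linarith, hw1, hw2⟩⟩
      · exact ⟨-1, Or.inr rfl, Or.inr ⟨by linarith, hw1, hw2⟩⟩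
    · have ht1 : θ₁ = 2 * ω₁ := by
        have h1 : ω₂ * (θ₁ - 2 * ω₁) = 0 := by linear_combination (-2 : ℝ) * eB
        rcases mul_eq_zero.mp h1 with h | h
        · exact absurd h hw2
        · linarith
      have hsq : ω₂ ^ 2 = ω₁ ^ 2 := by
        linear_combination -eA + (ω₁ / 2) * ht1
      have hw1 : ω₁ ≠ 0 := by
        intro h
        apply hw2
        have : ω₂ ^ 2 = 0 := by rw [hsq, h]; ring
        exact pow_eq_zero_iff two_ne_zero |>.mp this
      have ht2 : θ₂ = 2 * ω₂ := by
        have h1 : ω₁ * (θ₂ - 2 * ω₂) = 0 := by linear_combination (-2 : ℝ) * eC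
        rcases mul_eq_zero.mp h1 with h | h
        · exact absurd h hw1
        · linarith
      have hfacω : (ω₁ - ω₂) * (ω₁ + ω₂) = 0 := by linear_combination -hsq
      rcases mul_eq_zero.mp hfacω with h | h
      · exact ⟨1, Or.inl rfl, Or.inl ⟨by linarith, ht1, by linarith⟩⟩
      · exact ⟨-1, Or.inr rfl, Or.inl ⟨by linarith, ht1, by linarith⟩⟩
  · -- the algebraic conditions imply flatness
    rintro ⟨ε, hε, hcond⟩ x y z
    have ht : (θ₁ = 2 * ω₂ ∧ θ₂ = 2 * ω₂ ∧ ω₁ = ω₂)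
        ∨ (θ₁ = -(2 * ω₂) ∧ θ₂ = 2 * ω₂ ∧ ω₁ = -ω₂)
        ∨ (θ₁ = θ₂ ∧ ω₁ = 0 ∧ ω₂ = 0)
        ∨ (θ₁ = -θ₂ ∧ ω₁ = 0 ∧ ω₂ = 0) := by
      rcases hε with rfl | rfl <;> rcases hcond with ⟨a, b, c⟩ | ⟨a, b, c⟩
      · exact Or.inl ⟨by linarith, by linarith, by linarith⟩
      · exact Or.inr (Or.inr (Or.inl ⟨by linarith, b, c⟩))
      · exact Or.inr (Or.inl ⟨by linarith, by linarith, by linarith⟩)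
      · exact Or.inr (Or.inr (Or.inr ⟨by linarith, b, c⟩))
    apply vext <;>
      simp only [Rc, Pi.sub_apply, Pi.zero_apply, hN0, hN1, hN2, hB0, hB1, hB2] <;>
      rcases ht with ⟨a, b, c⟩ | ⟨a, b, c⟩ | ⟨a, b, c⟩ | ⟨a, b, c⟩ <;>
      simp only [a, b, c] <;> ring
end
end

section
/- The associated scalar curvature τ* vanishes if and only if one of the following four conditions holds: (i) θ₁ = 2ω₁ and θ₂ = 2ω₂; (ii) θ₁ = 0 and ω₁ = 0; (iii) θ₂ = 0 and ω₂ = 0; (iv) ω₁ = 0 and ω₂ = 0. -/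
noncomputable section

set_option maxHeartbeats 2000000 in
/-- `*`-scalar flatness criterion. -/
theorem statement16
    (θ₁ θ₂ ω₁ ω₂ : ℝ) (hcomm : θ₁ * ω₂ = θ₂ * ω₁)
    (br : V →ₗ[ℝ] V →ₗ[ℝ] V)
    (hskew : ∀ x y : V, br x y = - br y x)
    (h01 : br (e 0) (e 1) = (-ω₂) • e 0)
    (h02 : br (e 0) (e 2) = ω₁ • e 0)
    (h12 : br (e 1) (e 2) = ((1/2) * θ₁) • e 1 + ((1/2) * θ₂) • e 2)
    (nabla : V →ₗ[ℝ] V →ₗ[ℝ] V)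
    (hKoszul : ∀ x y z : V, 2 * gB (nabla x y) z =
      gB (br x y) z + gB (br z x) y + gB (br z y) x) :
    scalStar br nabla = 0 ↔
      ((θ₁ = 2 * ω₁ ∧ θ₂ = 2 * ω₂) ∨ (θ₁ = 0 ∧ ω₁ = 0) ∨
       (θ₂ = 0 ∧ ω₂ = 0) ∨ (ω₁ = 0 ∧ ω₂ = 0)) := by
  have hdiag : ∀ x : V, br x x = 0 := by
    intro x
    have h := hskew x x
    have h2 : (2 : ℝ) • br x x = 0 := by
      rw [two_smul]; nth_rewrite 1 [h]; abel
    simpa using (smul_eq_zero.mp h2).resolve_left (by norm_num)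
  have h10 : br (e 1) (e 0) = ω₂ • e 0 := by
    rw [hskew, h01]; ext k; simp
  have h20 : br (e 2) (e 0) = (-ω₁) • e 0 := by
    rw [hskew, h02]; ext k; simp
  have h21 : br (e 2) (e 1) = (-((1/2) * θ₁)) • e 1 + (-((1/2) * θ₂)) • e 2 := by
    rw [hskew, h12]; ext k; simp; ring
  have hb0 : br (e 0) (e 0) = 0 := hdiag _
  have hb1 : br (e 1) (e 1) = 0 := hdiag _
  have hb2 : br (e 2) (e 2) = 0 := hdiag _
  have n00 : nabla (e 0) (e 0) = ω₂ • e 1 + ω₁ • e 2 := by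
    have k0 := hKoszul (e 0) (e 0) (e 0)
    have k1 := hKoszul (e 0) (e 0) (e 1)
    have k2 := hKoszul (e 0) (e 0) (e 2)
    simp only [hb0, hb1, hb2, h01, h02, h10, h12, h20, h21] at k0 k1 k2
    simp [gB, e, Pi.single_apply] at k0 k1 k2
    funext k; fin_cases k <;> simp [e, Pi.single_apply] <;> linarith
  have n01 : nabla (e 0) (e 1) = (-ω₂) • e 0 := by
    have k0 := hKoszul (e 0) (e 1) (e 0)
    have k1 := hKoszul (e 0) (e 1) (e 1)
    have k2 := hKoszul (e 0) (e 1) (e 2)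
    simp only [hb0, hb1, hb2, h01, h02, h10, h12, h20, h21] at k0 k1 k2
    simp [gB, e, Pi.single_apply] at k0 k1 k2
    funext k; fin_cases k <;> simp [e, Pi.single_apply] <;> linarith
  have n02 : nabla (e 0) (e 2) = ω₁ • e 0 := by
    have k0 := hKoszul (e 0) (e 2) (e 0)
    have k1 := hKoszul (e 0) (e 2) (e 1)
    have k2 := hKoszul (e 0) (e 2) (e 2)
    simp only [hb0, hb1, hb2, h01, h02, h10, h12, h20, h21] at k0 k1 k2
    simp [gB, e, Pi.single_apply] at k0 k1 k2
    funext k; fin_cases k <;> simp [e, Pi.single_apply] <;> linarith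
  have n10 : nabla (e 1) (e 0) = 0 := by
    have k0 := hKoszul (e 1) (e 0) (e 0)
    have k1 := hKoszul (e 1) (e 0) (e 1)
    have k2 := hKoszul (e 1) (e 0) (e 2)
    simp only [hb0, hb1, hb2, h01, h02, h10, h12, h20, h21] at k0 k1 k2
    simp [gB, e, Pi.single_apply] at k0 k1 k2
    funext k; fin_cases k <;> simp [e, Pi.single_apply] <;> linarith
  have n11 : nabla (e 1) (e 1) = ((1/2) * θ₁) • e 2 := by
    have k0 := hKoszul (e 1) (e 1) (e 0)
    have k1 := hKoszul (e 1) (e 1) (e 1)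
    have k2 := hKoszul (e 1) (e 1) (e 2)
    simp only [hb0, hb1, hb2, h01, h02, h10, h12, h20, h21] at k0 k1 k2
    simp [gB, e, Pi.single_apply] at k0 k1 k2
    funext k; fin_cases k <;> simp [e, Pi.single_apply] <;> linarith
  have n12 : nabla (e 1) (e 2) = ((1/2) * θ₁) • e 1 := by
    have k0 := hKoszul (e 1) (e 2) (e 0)
    have k1 := hKoszul (e 1) (e 2) (e 1)
    have k2 := hKoszul (e 1) (e 2) (e 2)
    simp only [hb0, hb1, hb2, h01, h02, h10, h12, h20, h21] at k0 k1 k2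
    simp [gB, e, Pi.single_apply] at k0 k1 k2
    funext k; fin_cases k <;> simp [e, Pi.single_apply] <;> linarith
  have n20 : nabla (e 2) (e 0) = 0 := by
    have k0 := hKoszul (e 2) (e 0) (e 0)
    have k1 := hKoszul (e 2) (e 0) (e 1)
    have k2 := hKoszul (e 2) (e 0) (e 2)
    simp only [hb0, hb1, hb2, h01, h02, h10, h12, h20, h21] at k0 k1 k2
    simp [gB, e, Pi.single_apply] at k0 k1 k2
    funext k; fin_cases k <;> simp [e, Pi.single_apply] <;> linarith
  have n21 : nabla (e 2) (e 1) = (-((1/2) * θ₂)) • e 2 := by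
    have k0 := hKoszul (e 2) (e 1) (e 0)
    have k1 := hKoszul (e 2) (e 1) (e 1)
    have k2 := hKoszul (e 2) (e 1) (e 2)
    simp only [hb0, hb1, hb2, h01, h02, h10, h12, h20, h21] at k0 k1 k2
    simp [gB, e, Pi.single_apply] at k0 k1 k2
    funext k; fin_cases k <;> simp [e, Pi.single_apply] <;> linarith
  have n22 : nabla (e 2) (e 2) = (-((1/2) * θ₂)) • e 1 := by
    have k0 := hKoszul (e 2) (e 2) (e 0)
    have k1 := hKoszul (e 2) (e 2) (e 1)
    have k2 := hKoszul (e 2) (e 2) (e 2)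
    simp only [hb0, hb1, hb2, h01, h02, h10, h12, h20, h21] at k0 k1 k2
    simp [gB, e, Pi.single_apply] at k0 k1 k2
    funext k; fin_cases k <;> simp [e, Pi.single_apply] <;> linarith
  have hs : scalStar br nabla = 2 * ω₁ * ω₂ - (1/2) * θ₁ * ω₂ - (1/2) * θ₂ * ω₁ := by
    simp only [scalStar, ricStar, R4, Rc, hb0, hb1, hb2, h01, h02, h10, h12, h20, h21,
      n00, n01, n02, n10, n11, n12, n20, n21, n22,
      map_add, map_smul, map_zero, map_neg, LinearMap.zero_apply, LinearMap.add_apply,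
      LinearMap.smul_apply, LinearMap.neg_apply, smul_add, smul_smul, smul_zero]
    simp [gB, phi, e, Pi.single_apply]
    ring
  rw [hs]
  constructor
  · intro h
    have h2 : ω₂ * (2 * ω₁ - θ₁) = 0 := by linear_combination h - (1/2) * hcomm
    have h3 : ω₁ * (2 * ω₂ - θ₂) = 0 := by linear_combination h + (1/2) * hcomm
    rcases mul_eq_zero.mp h2 with hw2 | ht1 <;> rcases mul_eq_zero.mp h3 with hw1 | ht2
    · exact Or.inr (Or.inr (Or.inr ⟨hw1, hw2⟩))
    · exact Or.inr (Or.inr (Or.inl ⟨by linarith, hw2⟩))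
    · exact Or.inr (Or.inl ⟨by linarith, hw1⟩)
    · exact Or.inl ⟨by linarith, by linarith⟩
  · rintro (⟨h1, h2⟩ | ⟨h1, h2⟩ | ⟨h1, h2⟩ | ⟨h1, h2⟩) <;> subst h1 <;> subst h2 <;> ring
end
end

section
/- The manifold is an isotropic-F₀-manifold, i.e. ‖∇φ‖² = 0, if and only if there exists ε ∈ {−1, 1} such that θ₁ = εθ₂ and ω₁ = εω₂. -/
noncomputable section

set_option maxHeartbeats 2000000

lemma fin3_mk0 (h : 0 < 3) : (⟨0, h⟩ : Fin 3) = 0 := rfl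
lemma fin3_mk1 (h : 1 < 3) : (⟨1, h⟩ : Fin 3) = 1 := rfl
lemma fin3_mk2 (h : 2 < 3) : (⟨2, h⟩ : Fin 3) = 2 := rfl

lemma alg17 (θ₁ θ₂ ω₁ ω₂ : ℝ) (hcomm : θ₁ * ω₂ = θ₂ * ω₁)
    (h : 2*θ₁^2 - 2*θ₂^2 + 2*ω₁^2 - 2*ω₂^2 = 0) :
    ∃ ε : ℝ, (ε = 1 ∨ ε = -1) ∧ θ₁ = ε * θ₂ ∧ ω₁ = ε * ω₂ := by
  have hsq : θ₁^2 * ω₂^2 = θ₂^2 * ω₁^2 := by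
    rw [show θ₁^2*ω₂^2 = (θ₁*ω₂)^2 by ring, show θ₂^2*ω₁^2 = (θ₂*ω₁)^2 by ring, hcomm]
  have key : (θ₂^2 + ω₂^2) * (ω₂^2 - ω₁^2) = 0 := by nlinarith [hsq, h]
  have hww : ω₁^2 = ω₂^2 := by
    rcases mul_eq_zero.mp key with h1 | h2
    · have h2 : θ₂ = 0 ∧ ω₂ = 0 := by constructor <;> nlinarith [sq_nonneg θ₂, sq_nonneg ω₂]
      have hθ1 : θ₁ = 0 := by nlinarith [h2.1, h2.2, sq_nonneg θ₁, sq_nonneg ω₁]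
      have hω1 : ω₁ = 0 := by nlinarith [h2.1, h2.2, sq_nonneg θ₁, sq_nonneg ω₁]
      rw [hω1, h2.2]
    · linarith
  have htt : θ₁^2 = θ₂^2 := by linarith
  by_cases hθ2 : θ₂ = 0
  · have hθ1 : θ₁ = 0 := by nlinarith [htt]
    have : (ω₁ - ω₂) * (ω₁ + ω₂) = 0 := by nlinarith [hww]
    rcases mul_eq_zero.mp this with h1 | h2
    · exact ⟨1, Or.inl rfl, by rw [hθ1, hθ2]; ring, by linarith⟩
    · exact ⟨-1, Or.inr rfl, by rw [hθ1, hθ2]; ring, by linarith⟩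
  · have : (θ₁ - θ₂) * (θ₁ + θ₂) = 0 := by nlinarith [htt]
    rcases mul_eq_zero.mp this with h1 | h2
    · refine ⟨1, Or.inl rfl, by linarith, ?_⟩
      have h1' : θ₁ = θ₂ := by linarith
      have : θ₂ * ω₂ = θ₂ * ω₁ := by rw [← hcomm, h1']
      have := mul_left_cancel₀ hθ2 this
      linarith
    · refine ⟨-1, Or.inr rfl, by linarith, ?_⟩
      have h2' : θ₁ = -θ₂ := by linarith
      have : θ₂ * (-ω₂) = θ₂ * ω₁ := by rw [← hcomm, h2']; ring
      have := mul_left_cancel₀ hθ2 this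
      linarith

/-- isotropic-F₀ criterion. -/
theorem statement17
    (θ₁ θ₂ ω₁ ω₂ : ℝ) (hcomm : θ₁ * ω₂ = θ₂ * ω₁)
    (br : V →ₗ[ℝ] V →ₗ[ℝ] V)
    (hskew : ∀ x y : V, br x y = - br y x)
    (h01 : br (e 0) (e 1) = (-ω₂) • e 0)
    (h02 : br (e 0) (e 2) = ω₁ • e 0)
    (h12 : br (e 1) (e 2) = ((1/2) * θ₁) • e 1 + ((1/2) * θ₂) • e 2)
    (nabla : V →ₗ[ℝ] V →ₗ[ℝ] V)
    (hKoszul : ∀ x y z : V, 2 * gB (nabla x y) z =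
      gB (br x y) z + gB (br z x) y + gB (br z y) x) :
    normNablaPhiSq nabla = 0 ↔
      ∃ ε : ℝ, (ε = 1 ∨ ε = -1) ∧ θ₁ = ε * θ₂ ∧ ω₁ = ε * ω₂ := by
  have hval : normNablaPhiSq nabla = 2*θ₁^2 - 2*θ₂^2 + 2*ω₁^2 - 2*ω₂^2 := by
    have hself : ∀ x : V, br x x = 0 := by
      intro x; funext k
      have h := congrFun (hskew x x) k
      simp only [Pi.neg_apply] at h
      have : (br x x) k = 0 := by linarith
      simpa using this
    have h10 : br (e 1) (e 0) = ω₂ • e 0 := by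
      rw [hskew, h01]; module
    have h20 : br (e 2) (e 0) = (-ω₁) • e 0 := by
      rw [hskew, h02]; module
    have h21 : br (e 2) (e 1) = (-((1/2) * θ₁)) • e 1 + (-((1/2) * θ₂)) • e 2 := by
      rw [hskew, h12]; module
    have hN : ∀ i j : Fin 3, nabla (e i) (e j) =
        ![![![0, ω₂, ω₁], ![-ω₂, 0, 0], ![ω₁, 0, 0]],
          ![![0, 0, 0], ![0, 0, θ₁/2], ![0, θ₁/2, 0]],
          ![![0, 0, 0], ![0, 0, -θ₂/2], ![0, -θ₂/2, 0]]] i j := by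
      intro i j
      funext k
      have hK := hKoszul (e i) (e j) (e k)
      fin_cases i <;> fin_cases j <;> fin_cases k <;>
      · simp only [fin3_mk0, fin3_mk1, fin3_mk2] at hK ⊢
        simp only [h01, h02, h12, h10, h20, h21, hself] at hK
        simp [gB, e, Pi.single_apply, Fin.ext_iff, Matrix.vecHead, Matrix.vecTail] at hK ⊢
        linarith
    have hphi0 : phi (e 0) = 0 := by
      funext k; fin_cases k <;> simp [phi, e, Pi.single_apply]
    have hphi1 : phi (e 1) = e 2 := by
      funext k; fin_cases k <;> simp [phi, e, Pi.single_apply]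
    have hphi2 : phi (e 2) = -(e 1) := by
      funext k; fin_cases k <;> simp [phi, e, Pi.single_apply]
    simp only [normNablaPhiSq, Fin.sum_univ_three, nablaPhi, hphi0, hphi1, hphi2,
      map_zero, map_neg, hN]
    simp [gB, phi, eps, Matrix.vecHead, Matrix.vecTail, Pi.sub_apply]
    ring
  rw [hval]
  constructor
  · exact alg17 θ₁ θ₂ ω₁ ω₂ hcomm
  · rintro ⟨ε, (rfl | rfl), ht, hw⟩ <;> rw [ht, hw] <;> ring
end
end

section
/- The manifold is an isotropic-F₀-manifold if and only if it is scalar flat: ‖∇φ‖² = 0 if and only if τ = 0. -/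
noncomputable section

lemma aux_iff (A B C : ℝ) (hABC : C^2 = A*B) :
    (2*A + 2*B = 0) ↔ (A/2 + 2*B + C = 0) := by
  constructor <;> intro h
  · have hA : A = -B := by linarith
    have hC2 : C^2 = -(B^2) := by linear_combination hABC + B*hA
    have hB : B = 0 := by nlinarith [sq_nonneg C, sq_nonneg B]
    have hC : C = 0 := by nlinarith [sq_nonneg C]
    linarith
  · have hC : C = -(A/2+2*B) := by linarith
    have hCs : C^2 = (A/2+2*B)^2 := by rw [hC]; ring
    have h2 : (A+2*B)^2 + 12*B^2 = 0 := by linear_combination 4*hABC - 4*hCs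
    have hB : B = 0 := by nlinarith [sq_nonneg (A+2*B), sq_nonneg B]
    have hA : A = 0 := by nlinarith [sq_nonneg (A+2*B)]
    linarith

/-- isotropic-F₀ if and only if scalar flat. -/
theorem statement18
    (θ₁ θ₂ ω₁ ω₂ : ℝ) (hcomm : θ₁ * ω₂ = θ₂ * ω₁)
    (br : V →ₗ[ℝ] V →ₗ[ℝ] V)
    (hskew : ∀ x y : V, br x y = - br y x)
    (h01 : br (e 0) (e 1) = (-ω₂) • e 0)
    (h02 : br (e 0) (e 2) = ω₁ • e 0)
    (h12 : br (e 1) (e 2) = ((1/2) * θ₁) • e 1 + ((1/2) * θ₂) • e 2)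
    (nabla : V →ₗ[ℝ] V →ₗ[ℝ] V)
    (hKoszul : ∀ x y z : V, 2 * gB (nabla x y) z =
      gB (br x y) z + gB (br z x) y + gB (br z y) x) :
    normNablaPhiSq nabla = 0 ↔ scal br nabla = 0 := by
  -- basis values
  have he0 : e 0 = ![1,0,0] := by funext i; fin_cases i <;> simp [e]
  have he1 : e 1 = ![0,1,0] := by funext i; fin_cases i <;> simp [e]
  have he2 : e 2 = ![0,0,1] := by funext i; fin_cases i <;> simp [e]
  have hsplit : ∀ v : V, v = v 0 • e 0 + v 1 • e 1 + v 2 • e 2 := by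
    intro v; funext i; fin_cases i <;> simp [he0, he1, he2]
  have hdiag : ∀ x : V, br x x = 0 := by
    intro x
    have h := hskew x x
    have h2 : br x x + br x x = 0 := by nth_rewrite 2 [h]; simp
    have : (2:ℝ) • br x x = 0 := by rw [two_smul]; exact h2
    simpa using this
  have h10 : br (e 1) (e 0) = ω₂ • e 0 := by
    rw [hskew, h01]; module
  have h20 : br (e 2) (e 0) = (-ω₁) • e 0 := by
    rw [hskew, h02]; module
  have h21 : br (e 2) (e 1) = (-((1/2)*θ₁)) • e 1 + (-((1/2)*θ₂)) • e 2 := by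
    rw [hskew, h12]; module
  have hbr : ∀ x y : V, br x y =
      ![-ω₂*(x 0*y 1 - x 1*y 0) + ω₁*(x 0*y 2 - x 2*y 0),
        θ₁/2*(x 1*y 2 - x 2*y 1), θ₂/2*(x 1*y 2 - x 2*y 1)] := by
    intro x y
    conv_lhs => rw [hsplit x, hsplit y]
    simp only [map_add, map_smul, LinearMap.add_apply, LinearMap.smul_apply,
      h01, h02, h12, h10, h20, h21, hdiag 0, hdiag (e 0), hdiag (e 1), hdiag (e 2)]
    funext i
    fin_cases i <;>
      simp [he0, he1, he2, hdiag] <;> ring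
  have hnab : ∀ x y : V, nabla x y =
      ![x 0*(ω₁*y 2 - ω₂*y 1),
        ω₂*(x 0*y 0) + (θ₁*x 1 - θ₂*x 2)*y 2/2,
        ω₁*(x 0*y 0) + (θ₁*x 1 - θ₂*x 2)*y 1/2] := by
    intro x y
    funext i
    fin_cases i
    · have h := hKoszul x y (e 0)
      rw [hbr x y, hbr (e 0) x, hbr (e 0) y] at h
      simp [gB, he0, he1, he2] at h ⊢
      linarith
    · have h := hKoszul x y (e 1)
      rw [hbr x y, hbr (e 1) x, hbr (e 1) y] at h
      simp [gB, he0, he1, he2] at h ⊢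
      linarith
    · have h := hKoszul x y (e 2)
      rw [hbr x y, hbr (e 2) x, hbr (e 2) y] at h
      simp [gB, he0, he1, he2] at h ⊢
      linarith
  have key : (θ₁*ω₁ - θ₂*ω₂)^2 = (θ₁^2-θ₂^2)*(ω₁^2-ω₂^2) := by
    linear_combination (θ₁*ω₂ - θ₂*ω₁)*hcomm
  have enn : normNablaPhiSq nabla = 2*(θ₁^2-θ₂^2) + 2*(ω₁^2-ω₂^2) := by
    simp only [normNablaPhiSq, nablaPhi, Fin.sum_univ_three, eps, gB, phi]
    simp only [hnab, hbr]
    simp [he0, he1, he2]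
    ring
  have etau : scal br nabla = (θ₁^2-θ₂^2)/2 + 2*(ω₁^2-ω₂^2) + (θ₁*ω₁ - θ₂*ω₂) := by
    simp only [scal, ric, R4, Rc, gB]
    simp only [hnab, hbr]
    simp [he0, he1, he2]
    ring
  rw [enn, etau]
  exact aux_iff _ _ _ key
end
end
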